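/- arXiv:1502.02933 — 11 statements merged into one kernel-verified Lean document; each statement's English description precedes it below -/
import Mathlib

section
/- Let G be a P5-free graph (G contains no induced path on 5 vertices). Let Q1 and Q2 be paths in G of order at least 3 sharing a common endpoint a, such that Q1 − a and Q2 − a are vertex-disjoint. If Q1 is an induced path of G, then either some vertex of Q1 − a is adjacent to some vertex of Q2 − a, or every vertex of Q2 other than a is adjacent to a. -/
open SimpleGraph

variable {V : Type*} [Fintype V] [DecidableEq V]

/-- `p 0, p 1, ..., p (n-1)` is a path of order `n` in `G`. -/
def IsPathOn (G : SimpleGraph V) (n : ℕ) (p : ℕ → V) : Prop :=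
  (∀ i j, i < n → j < n → p i = p j → i = j) ∧
  (∀ i, i + 1 < n → G.Adj (p i) (p (i + 1)))

/-- An induced path of order `n` in `G`. -/
def IsInducedPathOn (G : SimpleGraph V) (n : ℕ) (p : ℕ → V) : Prop :=
  IsPathOn G n p ∧ ∀ i j, i < n → j < n → G.Adj (p i) (p j) → (i + 1 = j ∨ j + 1 = i)

/-- `G` contains no induced path on 5 vertices. -/
def P5Free (G : SimpleGraph V) : Prop := ¬ ∃ p : ℕ → V, IsInducedPathOn G 5 p

/-- `G` contains no induced `K₄` minus an edge. -/
def K4mFree (G : SimpleGraph V) : Prop :=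
  ¬ ∃ a b c d : V, a ≠ b ∧ a ≠ c ∧ a ≠ d ∧ b ≠ c ∧ b ≠ d ∧ c ≠ d ∧
    G.Adj a b ∧ G.Adj a c ∧ G.Adj a d ∧ G.Adj b c ∧ G.Adj b d ∧ ¬ G.Adj c d

/-- `G` contains no induced `W*` (two triangles `abc`, `def` joined by the edge `cd`). -/
def WStarFree (G : SimpleGraph V) : Prop :=
  ¬ ∃ a b c d e f : V, List.Nodup [a, b, c, d, e, f] ∧
    G.Adj a b ∧ G.Adj b c ∧ G.Adj a c ∧ G.Adj d e ∧ G.Adj e f ∧ G.Adj d f ∧ G.Adj c d ∧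
    ¬ G.Adj a d ∧ ¬ G.Adj a e ∧ ¬ G.Adj a f ∧
    ¬ G.Adj b d ∧ ¬ G.Adj b e ∧ ¬ G.Adj b f ∧ ¬ G.Adj c e ∧ ¬ G.Adj c f

/-- `G` contains no induced paw (triangle `abc` with pendant edge `cd`). -/
def Z1Free (G : SimpleGraph V) : Prop :=
  ¬ ∃ a b c d : V, List.Nodup [a, b, c, d] ∧
    G.Adj a b ∧ G.Adj b c ∧ G.Adj a c ∧ G.Adj c d ∧ ¬ G.Adj a d ∧ ¬ G.Adj b d

/-- An (oriented) cycle of length `n` in `G`, as an injective map `ZMod n → V`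
with consecutive vertices adjacent. -/
def IsCycleOn (G : SimpleGraph V) (n : ℕ) (c : ZMod n → V) : Prop :=
  3 ≤ n ∧ Function.Injective c ∧ ∀ i, G.Adj (c i) (c (i + 1))

/-- A longest cycle of `G`. -/
def IsLongestCycle (G : SimpleGraph V) (n : ℕ) (c : ZMod n → V) : Prop :=
  IsCycleOn G n c ∧ ∀ (m : ℕ) (d : ZMod m → V), IsCycleOn G m d → m ≤ n

/-- A dominating cycle: every edge of `G` is incident with a vertex of the cycle. -/
def DominatingCycle (G : SimpleGraph V) (n : ℕ) (c : ZMod n → V) : Prop :=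
  IsCycleOn G n c ∧ ∀ u v : V, G.Adj u v → u ∈ Set.range c ∨ v ∈ Set.range c

/-- `H` is (the vertex set of) a connected component of `G - R`. -/
def IsCompOff (G : SimpleGraph V) (R : Set V) (H : Set V) : Prop :=
  H.Nonempty ∧ Disjoint H R ∧ (G.induce H).Connected ∧
  ∀ u v : V, u ∈ H → v ∉ H → v ∉ R → ¬ G.Adj u v

/-- `μ`: the maximum order of a component of `G - R`. -/
noncomputable def muC (G : SimpleGraph V) (R : Set V) : ℕ :=
  sSup {k | ∃ H : Set V, IsCompOff G R H ∧ H.ncard = k}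

/-- `ω`: the number of components of `G - R` of maximum order. -/
noncomputable def omegaC (G : SimpleGraph V) (R : Set V) : ℕ :=
  {H : Set V | IsCompOff G R H ∧ H.ncard = muC G R}.ncard

/-- `G` is 2-connected: at least 3 vertices, connected, and removing any
vertex leaves it connected. -/
def TwoConnected (G : SimpleGraph V) : Prop :=
  3 ≤ Fintype.card V ∧ G.Connected ∧
  ∀ v : V, (G.induce ({v}ᶜ : Set V)).Connected

/-- The set of indices of `ZMod n` encountered going from `s` to `t` in the
positive direction (including both `s` and `t`). -/
def seg (n : ℕ) (s t : ZMod n) : Set (ZMod n) :=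
  {x | ∃ k : ℕ, x = s + (k : ZMod n) ∧ ∀ m : ℕ, m < k → s + (m : ZMod n) ≠ t}

/-- `G` is complete multipartite: the vertices partition into classes of an
equivalence relation which are independent, with all edges between classes. -/
def CompleteMultipartite (G : SimpleGraph V) : Prop :=
  ∃ r : V → V → Prop, Equivalence r ∧ ∀ u v : V, u ≠ v → (G.Adj u v ↔ ¬ r u v)

/-- A `C`-path (for `R = V(C)`): a path of order at least 2 whose ends lie in
`R` and whose internal vertices avoid `R`. -/
def IsCPath (G : SimpleGraph V) (R : Set V) (m : ℕ) (p : ℕ → V) : Prop :=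
  2 ≤ m ∧ IsPathOn G m p ∧ p 0 ∈ R ∧ p (m - 1) ∈ R ∧
  ∀ i, 0 < i → i < m - 1 → p i ∉ R

omit [Fintype V] [DecidableEq V] in
theorem P5Free.false_of_induced_path {G : SimpleGraph V} (hG : P5Free G) {v0 v1 v2 v3 v4 : V}
    (h01 : G.Adj v0 v1) (h12 : G.Adj v1 v2) (h23 : G.Adj v2 v3) (h34 : G.Adj v3 v4)
    (n02 : ¬ G.Adj v0 v2) (n03 : ¬ G.Adj v0 v3) (n04 : ¬ G.Adj v0 v4)
    (n13 : ¬ G.Adj v1 v3) (n14 : ¬ G.Adj v1 v4) (n24 : ¬ G.Adj v2 v4) : False := by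
  -- the non-edges force distinctness: e.g. `v0 = v2` would make `v0` adjacent to `v3`
  have d02 : v0 ≠ v2 := by rintro rfl; exact n03 h23
  have d03 : v0 ≠ v3 := by rintro rfl; exact n13 h01.symm
  have d04 : v0 ≠ v4 := by rintro rfl; exact n03 h34.symm
  have d13 : v1 ≠ v3 := by rintro rfl; exact n03 h01
  have d14 : v1 ≠ v4 := by rintro rfl; exact n04 h01
  have d24 : v2 ≠ v4 := by rintro rfl; exact n14 h12
  refine hG ⟨fun k => [v0, v1, v2, v3, v4].getD k v0, ⟨?_, ?_⟩, ?_⟩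
  · intro i j hi hj h
    interval_cases i <;> interval_cases j <;> simp_all [eq_comm, h01.ne, h12.ne, h23.ne, h34.ne]
  · intro i hi
    replace hi : i < 4 := by omega
    interval_cases i <;> simpa
  · intro i j hi hj h
    interval_cases i <;> interval_cases j <;> simp_all [G.adj_comm]

omit [Fintype V] [DecidableEq V] in
theorem P5Free.adj_of_path_avoiding {G : SimpleGraph V} (hG : P5Free G) {a b₁ b₂ : V}
    (hb₁ : G.Adj b₁ a) (hb₂ : G.Adj b₂ b₁) (hb₂a : ¬ G.Adj b₂ a) {n : ℕ} {q : ℕ → V}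
    (hq : IsPathOn G n q) (hqa : q 0 = a)
    (hqb₁ : ∀ j, 0 < j → j < n → ¬ G.Adj b₁ (q j))
    (hqb₂ : ∀ j, 0 < j → j < n → ¬ G.Adj b₂ (q j)) :
    ∀ j, 0 < j → j < n → G.Adj a (q j) := by
  intro j hj hjn
  induction j with
  | zero => omega
  | succ k ih =>
    rcases Nat.eq_zero_or_pos k with rfl | hk
    · exact hqa ▸ hq.2 0 hjn
    -- otherwise `b₂ b₁ a (q k) (q (k+1))` would be an induced `P₅`
    by_contra hna
    exact hG.false_of_induced_path hb₂ hb₁ (ih hk (by omega)) (hq.2 k hjn) hb₂a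
      (hqb₂ k hk (by omega)) (hqb₂ (k + 1) hj hjn) (hqb₁ k hk (by omega))
      (hqb₁ (k + 1) hj hjn) hna

theorem stmt_0_general (G : SimpleGraph V) (hG : P5Free G)
    (n1 n2 : ℕ) (q1 q2 : ℕ → V) (a : V)
    (hq2 : IsPathOn G n2 q2)
    (hn1 : 3 ≤ n1)
    (ha1 : q1 0 = a) (ha2 : q2 0 = a)
    (hind : IsInducedPathOn G n1 q1) :
    (∃ i j, 0 < i ∧ i < n1 ∧ 0 < j ∧ j < n2 ∧ G.Adj (q1 i) (q2 j)) ∨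
    (∀ j, 0 < j → j < n2 → G.Adj a (q2 j)) := by
  refine or_iff_not_imp_left.2 fun hcross => ?_
  simp only [not_exists, not_and] at hcross
  have hq1adj := hind.1.2
  have hchord : ¬ G.Adj (q1 2) a := fun h => by
    rcases hind.2 2 0 (by omega) (by omega) (ha1 ▸ h) with h | h <;> omega
  exact hG.adj_of_path_avoiding (ha1 ▸ (hq1adj 0 (by omega)).symm) (hq1adj 1 (by omega)).symm hchord
    hq2 ha2 (hcross 1 · one_pos (by omega)) (hcross 2 · two_pos (by omega))

theorem stmt_0 (G : SimpleGraph V) (hG : P5Free G)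
    (n1 n2 : ℕ) (q1 q2 : ℕ → V) (a : V)
    (hq1 : IsPathOn G n1 q1) (hq2 : IsPathOn G n2 q2)
    (hn1 : 3 ≤ n1) (hn2 : 3 ≤ n2)
    (ha1 : q1 0 = a) (ha2 : q2 0 = a)
    (hdisj : ∀ i j, 0 < i → i < n1 → 0 < j → j < n2 → q1 i ≠ q2 j)
    (hind : IsInducedPathOn G n1 q1) :
    (∃ i j, 0 < i ∧ i < n1 ∧ 0 < j ∧ j < n2 ∧ G.Adj (q1 i) (q2 j)) ∨
    (∀ j, 0 < j → j < n2 → G.Adj a (q2 j)) :=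
  stmt_0_general G hG n1 n2 q1 q2 a hq2 hn1 ha1 ha2 hind
end

section
/- Let G be a graph, C a longest cycle of G, and H a connected component of G − C. Then for any vertices x, y of H, the set of neighbors of x on C is disjoint from the set of immediate predecessors (with respect to a fixed orientation of C) of neighbors of y on C. -/
open SimpleGraph

variable {V : Type*} [Fintype V] [DecidableEq V]

/-! If `x ~ c i` and `y ~ c (i + 1)`, then walking around `C` from `c (i + 1)` to `c i`, jumping
to `x`, following a path through `H` to `y` and returning to `c (i + 1)` gives a cycle longer
than `C`. -/

namespace SimpleGraph

variable {V : Type*} {G : SimpleGraph V}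

theorem Walk.IsPath.isPathOn_getVert {u v : V} {w : G.Walk u v} (hw : w.IsPath) :
    IsPathOn G (w.length + 1) w.getVert :=
  ⟨fun _ _ hi hj h => hw.getVert_injOn (Nat.lt_succ_iff.mp hi) (Nat.lt_succ_iff.mp hj) h,
    fun _ hi => w.adj_getVert_succ (by omega)⟩

theorem Connected.exists_isPathOn_induce {H : Set V} (hH : (G.induce H).Connected)
    {x y : V} (hx : x ∈ H) (hy : y ∈ H) :
    ∃ (k : ℕ) (p : ℕ → V), IsPathOn G (k + 1) p ∧ p 0 = x ∧ p k = y ∧ ∀ j, p j ∈ H := by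
  classical
  obtain ⟨w, hw⟩ := (hH.preconnected ⟨x, hx⟩ ⟨y, hy⟩).some.toPath
  have hG := (hw.map (f := (Embedding.induce H).toHom) Subtype.coe_injective).isPathOn_getVert
  rw [Walk.length_map] at hG
  refine ⟨w.length, fun j => w.getVert j, ?_, by simp, by simp, fun j => (w.getVert j).2⟩
  convert hG using 1
  exact funext fun j => (Walk.getVert_map (Embedding.induce H).toHom w j).symm

theorem IsCycleOn.isPathOn_rotate {n : ℕ} {c : ZMod n → V} (hc : IsCycleOn G n c) (a : ZMod n) :
    IsPathOn G n (fun j => c (a + j)) := by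
  obtain ⟨-, hinj, hadj⟩ := hc
  refine ⟨fun i j hi hj h => ?_, fun j _ => ?_⟩
  · have hij : (i : ZMod n) = j := add_left_cancel (hinj h)
    rwa [ZMod.natCast_eq_natCast_iff', Nat.mod_eq_of_lt hi, Nat.mod_eq_of_lt hj] at hij
  · simpa [add_assoc] using hadj (a + j)

theorem IsPathOn.append {n k : ℕ} {p q : ℕ → V} (hp : IsPathOn G n p) (hq : IsPathOn G k q)
    (hpq : ∀ a < n, ∀ b < k, p a ≠ q b) (hadj : G.Adj (p (n - 1)) (q 0)) :
    IsPathOn G (n + k) (fun j => if j < n then p j else q (j - n)) := by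
  refine ⟨fun i j hi hj h => ?_, fun j hj => ?_⟩
  · by_cases hin : i < n <;> by_cases hjn : j < n <;> simp only [hin, hjn, if_true, if_false] at h
    · exact hp.1 i j hin hjn h
    · exact absurd h (hpq i hin (j - n) (by omega))
    · exact absurd h.symm (hpq j hjn (i - n) (by omega))
    · have := hq.1 (i - n) (j - n) (by omega) (by omega) h
      omega
  · by_cases hjn : j + 1 < n
    · simpa [hjn, show j < n by omega] using hp.2 j hjn
    by_cases hjn' : j < n
    · obtain rfl : j = n - 1 := by omega
      dsimp only
      rw [if_pos hjn', if_neg hjn, show n - 1 + 1 - n = 0 by omega]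
      exact hadj
    · simpa [hjn', hjn, show j + 1 - n = j - n + 1 by omega] using hq.2 (j - n) (by omega)

theorem IsPathOn.isCycleOn {m : ℕ} {p : ℕ → V} (hp : IsPathOn G m p) (hm : 3 ≤ m)
    (hadj : G.Adj (p (m - 1)) (p 0)) : IsCycleOn G m (fun j => p j.val) := by
  have : NeZero m := ⟨by omega⟩
  have : Fact (1 < m) := ⟨by omega⟩
  refine ⟨hm, fun i j h => ZMod.val_injective m (hp.1 _ _ i.val_lt j.val_lt h), fun j => ?_⟩
  have hj := j.val_lt
  change G.Adj (p j.val) (p (j + 1).val)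
  rw [ZMod.val_add, ZMod.val_one]
  by_cases hlast : j.val + 1 < m
  · rw [Nat.mod_eq_of_lt hlast]
    exact hp.2 _ hlast
  · rw [show j.val + 1 = m by omega, Nat.mod_self, show j.val = m - 1 by omega]
    exact hadj

end SimpleGraph

theorem stmt_1 (G : SimpleGraph V) (n : ℕ) (c : ZMod n → V)
    (hc : IsLongestCycle G n c)
    (H : Set V) (hH : IsCompOff G (Set.range c) H)
    (x y : V) (hx : x ∈ H) (hy : y ∈ H) :
    ∀ i : ZMod n, G.Adj x (c i) → ¬ G.Adj y (c (i + 1)) := by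
  intro i hxi hyi
  obtain ⟨hcyc, hmax⟩ := hc
  obtain ⟨-, hdisj, hconn, -⟩ := hH
  have hn : 0 < n := by have := hcyc.1; omega
  obtain ⟨k, p, hp, rfl, rfl, hpH⟩ := hconn.exists_isPathOn_induce hx hy
  have hwrap : c (i + 1 + ((n - 1 : ℕ) : ZMod n)) = c i := by
    rw [Nat.cast_sub hn, ZMod.natCast_self]; ring_nf
  have hpath := (hcyc.isPathOn_rotate (i + 1)).append hp
    (fun a _ b _ h => Set.disjoint_left.mp hdisj (hpH b) ⟨_, h⟩) (hwrap ▸ hxi.symm)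
  have hlonger := hpath.isCycleOn (by have := hcyc.1; omega) (by simpa [hn] using hyi)
  have := hmax _ _ hlonger
  omega
end

section
/- Let G be a graph, C a longest cycle of G with a fixed orientation, H a component of G − C, and v1, v2 two distinct vertices on C each having a neighbor in H. Then there is no path of G with both endpoints on C, internal vertices off C, joining v1⁻ and v2⁻; in particular v1⁻v2⁻ is not an edge of G, and similarly v1⁺v2⁺ is not an edge of G. -/
open SimpleGraph

variable {V : Type*} [Fintype V] [DecidableEq V]

/-!
A path through `H` joining two consecutive vertices of `C` would extend `C`, so no two
consecutive vertices of `C` have neighbours in `H`. If a `C`-path `P` from `v₁⁻` to `v₂⁻` met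
`H`, its first internal vertex would lie in `H` (the internal vertices avoid `C` and `H` is a
component), making `v₁⁻` and `v₁` both adjacent to `H`. Otherwise, with `x₁, x₂` neighbours of
`v₁, v₂` in `H`, the cycle `x₁ ⋯ x₂ v₂ ⋯ v₁⁻ P v₂⁻ ⋯ v₁ x₁` (the two arcs of `C`, the second one
traversed backwards) is longer than `C`. An edge `v₁⁻v₂⁻` is such a `C`-path, and reversing the
orientation of `C` exchanges successors and predecessors.
-/

section Lists

variable {α : Type*}

theorem List.nodup_map_range {f : ℕ → α} {t : ℕ}
    (hf : ∀ k < t, ∀ l < t, f k = f l → k = l) : ((List.range t).map f).Nodup :=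
  List.nodup_range.map_on fun k hk l hl =>
    hf k (List.mem_range.1 hk) l (List.mem_range.1 hl)

theorem List.isChain_map_range {R : α → α → Prop} {f : ℕ → α} {t : ℕ}
    (hf : ∀ k, k + 1 < t → R (f k) (f (k + 1))) : ((List.range t).map f).IsChain R := by
  rw [List.isChain_map, List.isChain_range]
  exact fun k hk => hf k (by omega)

theorem exists_isCycleOn_of_list {G : SimpleGraph α} {L : List α} (h3 : 3 ≤ L.length)
    (hnd : L.Nodup) (hch : L.IsChain G.Adj)
    (hcl : ∀ x ∈ L.getLast?, ∀ y ∈ L.head?, G.Adj x y) :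
    ∃ d : ZMod L.length → α, IsCycleOn G L.length d := by
  have : NeZero L.length := ⟨by omega⟩
  have : Fact (1 < L.length) := ⟨by omega⟩
  refine ⟨fun i => L[i.val]'(ZMod.val_lt i), h3, fun i j hij => ?_, fun i => ?_⟩
  · exact ZMod.val_injective _ ((hnd.getElem_inj_iff).1 hij)
  have hsucc : (i + 1).val = (i.val + 1) % L.length := by rw [ZMod.val_add, ZMod.val_one]
  by_cases hlt : i.val + 1 < L.length
  · simp only [hsucc, Nat.mod_eq_of_lt hlt]
    exact List.isChain_iff_getElem.1 hch _ hlt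
  · have hi : i.val + 1 = L.length := by have := ZMod.val_lt i; omega
    have h0 : (i + 1).val = 0 := by rw [hsucc, hi, Nat.mod_self]
    simp only [h0]
    refine hcl _ ?_ _ ?_
    · simp [List.getLast?_eq_getElem?, show L.length - 1 = i.val by omega]
    · simp [List.head?_eq_getElem?]

theorem exists_list_of_connected_induce {G : SimpleGraph α} {H : Set α}
    (hconn : (G.induce H).Connected) {a b : α} (ha : a ∈ H) (hb : b ∈ H) :
    ∃ L : List α, L.Nodup ∧ L.IsChain G.Adj ∧ L.head? = some a ∧ L.getLast? = some b ∧
      ∀ x ∈ L, x ∈ H := by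
  classical
  obtain ⟨w⟩ := hconn.preconnected ⟨a, ha⟩ ⟨b, hb⟩
  set P := w.toPath
  refine ⟨P.1.support.map Subtype.val, P.2.support_nodup.map Subtype.val_injective,
    List.isChain_map_of_isChain Subtype.val (fun _ _ h => h) P.1.isChain_adj_support, ?_, ?_, ?_⟩
  · rw [List.head?_map, List.head?_eq_some_head P.1.support_ne_nil, Walk.head_support]; rfl
  · rw [List.getLast?_map, List.getLast?_eq_some_getLast P.1.support_ne_nil, Walk.getLast_support]
    rfl
  · simp +contextual

end Lists

theorem ZMod.exists_arc_lengths {n : ℕ} [NeZero n] {i j : ZMod n} (h : i ≠ j) :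
    ∃ s t : ℕ, 0 < s ∧ 0 < t ∧ s + t = n ∧ i + s = j ∧ j + t = i := by
  refine ⟨(j - i).val, (i - j).val, ZMod.val_pos.2 (sub_ne_zero.2 h.symm),
    ZMod.val_pos.2 (sub_ne_zero.2 h), ?_, by simp, by simp⟩
  rw [← neg_sub, ZMod.neg_val, if_neg (sub_ne_zero.2 h)]
  have := ZMod.val_lt (i - j)
  omega

section CycleArcs

variable {α : Type*} {G : SimpleGraph α} {n : ℕ} {c : ZMod n → α}

def cycleArc (c : ZMod n → α) (i : ZMod n) (t : ℕ) : List α :=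
  (List.range t).map fun k : ℕ => c (i + k)

theorem cycleArc_add (i : ZMod n) (s t : ℕ) :
    cycleArc c i (s + t) = cycleArc c i s ++ cycleArc c (i + s) t := by
  simp [cycleArc, List.range_add, add_assoc]

theorem length_cycleArc (i : ZMod n) (t : ℕ) : (cycleArc c i t).length = t := by
  simp [cycleArc]

theorem head?_cycleArc (i : ZMod n) {t : ℕ} (ht : 0 < t) :
    (cycleArc c i t).head? = some (c i) := by
  simp [cycleArc, List.head?_range, ht.ne']

theorem getLast?_cycleArc (i : ZMod n) {t : ℕ} (ht : 0 < t) :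
    (cycleArc c i t).getLast? = some (c (i + t - 1)) := by
  simp [cycleArc, List.getLast?_range, ht.ne', Nat.cast_pred ht, add_sub_assoc]

theorem mem_range_of_mem_cycleArc {i : ZMod n} {t : ℕ} {x : α} (hx : x ∈ cycleArc c i t) :
    x ∈ Set.range c := by
  obtain ⟨k, -, rfl⟩ := List.mem_map.1 hx
  exact ⟨_, rfl⟩

theorem IsCycleOn.nodup_cycleArc (hc : IsCycleOn G n c) (i : ZMod n) {t : ℕ} (ht : t ≤ n) :
    (cycleArc c i t).Nodup :=
  List.nodup_map_range fun k hk l hl h => by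
    have hkl := (ZMod.natCast_eq_natCast_iff' k l n).1 (add_left_cancel (hc.2.1 h))
    rwa [Nat.mod_eq_of_lt (by omega), Nat.mod_eq_of_lt (by omega)] at hkl

theorem IsCycleOn.isChain_cycleArc (hc : IsCycleOn G n c) (i : ZMod n) (t : ℕ) :
    (cycleArc c i t).IsChain G.Adj :=
  List.isChain_map_range fun k _ => by simpa [add_assoc] using hc.2.2 (i + k)

theorem IsCycleOn.exists_arcs (hc : IsCycleOn G n c) {i j : ZMod n} (h : i ≠ j) :
    ∃ s t : ℕ, 0 < s ∧ 0 < t ∧ s + t = n ∧ (cycleArc c j t ++ cycleArc c i s).Nodup ∧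
      (cycleArc c i s).getLast? = some (c (j - 1)) ∧
      (cycleArc c j t).getLast? = some (c (i - 1)) := by
  have : NeZero n := ⟨by have := hc.1; omega⟩
  obtain ⟨s, t, hs, ht, hst, his, hjt⟩ := ZMod.exists_arc_lengths h
  refine ⟨s, t, hs, ht, hst, ?_, by rw [getLast?_cycleArc _ hs, his],
    by rw [getLast?_cycleArc _ ht, hjt]⟩
  have := hc.nodup_cycleArc j (t := t + s) (by omega)
  rwa [cycleArc_add, hjt] at this

end CycleArcs

section Paths

variable {α : Type*} {G : SimpleGraph α}

def pathInterior (p : ℕ → α) (m : ℕ) : List α :=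
  (List.range (m - 2)).map fun k => p (k + 1)

theorem length_pathInterior (p : ℕ → α) (m : ℕ) : (pathInterior p m).length = m - 2 := by
  simp [pathInterior]

theorem mem_pathInterior {p : ℕ → α} {m : ℕ} {x : α} :
    x ∈ pathInterior p m ↔ ∃ i, 0 < i ∧ i < m - 1 ∧ p i = x := by
  simp only [pathInterior, List.mem_map, List.mem_range]
  constructor
  · rintro ⟨k, hk, rfl⟩
    exact ⟨k + 1, by omega, by omega, rfl⟩
  · rintro ⟨i, hi0, him, rfl⟩
    exact ⟨i - 1, by omega, by rw [Nat.sub_add_cancel hi0]⟩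

theorem IsPathOn.nodup_pathInterior {m : ℕ} {p : ℕ → α} (hp : IsPathOn G m p) :
    (pathInterior p m).Nodup :=
  List.nodup_map_range fun k hk l hl h => by
    have := hp.1 (k + 1) (l + 1) (by omega) (by omega) h
    omega

theorem IsPathOn.isChain_pathInterior_append {m : ℕ} {p : ℕ → α} (hp : IsPathOn G m p)
    (hm : 2 ≤ m) {l : List α} (hl : l.IsChain G.Adj) (hhead : l.head? = some (p (m - 1))) :
    (pathInterior p m ++ l).IsChain G.Adj ∧ (pathInterior p m ++ l).head? = some (p 1) := by
  obtain rfl | hm := hm.eq_or_lt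
  · simpa [pathInterior] using ⟨hl, hhead⟩
  refine ⟨List.isChain_append.2 ⟨List.isChain_map_range fun k hk => hp.2 (k + 1) (by omega),
    hl, ?_⟩, ?_⟩
  · have hlast : m - 2 - 1 + 1 + 1 = m - 1 := by omega
    simpa [pathInterior, List.getLast?_range, hhead, show m - 2 ≠ 0 by omega, ← hlast]
      using hp.2 (m - 2 - 1 + 1) (by omega)
  · simp [pathInterior, List.head?_range, show m - 2 ≠ 0 by omega]

theorem isCPath_pair {R : Set α} {u v : α} (huv : G.Adj u v) (hu : u ∈ R) (hv : v ∈ R) :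
    IsCPath G R 2 fun k => if k = 0 then u else v := by
  refine ⟨le_rfl, ⟨fun i j hi hj hij => ?_, fun i hi => ?_⟩, by simpa, by simpa, by omega⟩
  · interval_cases i <;> interval_cases j <;> simp_all [huv.ne, huv.ne.symm]
  · obtain rfl : i = 0 := by omega
    simpa using huv

end Paths

section Components

variable {α : Type*} {G : SimpleGraph α} {R H : Set α}

theorem IsCompOff.mem_of_adj (hH : IsCompOff G R H) {u v : α} (hu : u ∈ H) (hv : v ∉ R)
    (huv : G.Adj u v) : v ∈ H :=
  by_contra fun h => hH.2.2.2 u v hu h hv huv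

theorem IsCompOff.apply_one_mem_of_isPathOn (hH : IsCompOff G R H) {m : ℕ} {p : ℕ → α}
    (hp : IsPathOn G m p) (hR : ∀ i, 0 < i → i < m - 1 → p i ∉ R) :
    ∀ j, 0 < j → j < m - 1 → p j ∈ H → p 1 ∈ H
  | 1, _, _, hj => hj
  | j + 2, _, hjm, hj => hH.apply_one_mem_of_isPathOn hp hR (j + 1) (by omega) (by omega)
      (hH.mem_of_adj hj (hR _ (by omega) (by omega)) (hp.2 (j + 1) (by omega)).symm)

end Components

section LongestCycle

variable {α : Type*} {G : SimpleGraph α} {n : ℕ} {c : ZMod n → α} {H : Set α}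

theorem IsLongestCycle.length_le_of_list (hc : IsLongestCycle G n c) {L : List α}
    (hnd : L.Nodup) (hch : L.IsChain G.Adj)
    (hcl : ∀ x ∈ L.getLast?, ∀ y ∈ L.head?, G.Adj x y) : L.length ≤ n := by
  by_contra! hlt
  obtain ⟨d, hd⟩ := exists_isCycleOn_of_list (by have := hc.1.1; omega) hnd hch hcl
  exact hlt.not_ge (hc.2 _ d hd)

theorem IsLongestCycle.not_adj_comp_succ (hc : IsLongestCycle G n c)
    (hH : IsCompOff G (Set.range c) H) {j : ZMod n} (hj : ∃ x ∈ H, G.Adj (c j) x) :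
    ¬ ∃ x ∈ H, G.Adj (c (j + 1)) x := by
  rintro ⟨w, hw, hjw⟩
  obtain ⟨u, hu, hju⟩ := hj
  have hn : 0 < n := by have := hc.1.1; omega
  obtain ⟨Q, hQnd, hQch, hQhead, hQlast, hQH⟩ :=
    exists_list_of_connected_induce hH.2.2.1 hu hw
  have hQ : 0 < Q.length := List.length_pos_iff.2 (by rintro rfl; simp at hQhead)
  have hlen := hc.length_le_of_list (L := Q ++ cycleArc c (j + 1) n)
    (hQnd.append (hc.1.nodup_cycleArc _ le_rfl) fun x hxQ hxA =>
      Set.disjoint_left.1 hH.2.1 (hQH x hxQ) (mem_range_of_mem_cycleArc hxA))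
    (List.isChain_append.2 ⟨hQch, hc.1.isChain_cycleArc _ _, by
      simpa [hQlast, head?_cycleArc _ hn] using hjw.symm⟩)
    (by simpa [List.getLast?_append, getLast?_cycleArc _ hn, hQhead] using hju)
  simp only [List.length_append, length_cycleArc] at hlen
  omega

theorem IsLongestCycle.false_of_pred_path_avoiding (hc : IsLongestCycle G n c)
    (hH : IsCompOff G (Set.range c) H) {i1 i2 : ZMod n} (hne : c i1 ≠ c i2)
    (h1 : ∃ x ∈ H, G.Adj (c i1) x) (h2 : ∃ x ∈ H, G.Adj (c i2) x) {m : ℕ} {p : ℕ → α}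
    (hm : 2 ≤ m) (hp : IsPathOn G m p) (hp0 : p 0 = c (i1 - 1)) (hpm : p (m - 1) = c (i2 - 1))
    (havoid : ∀ x ∈ pathInterior p m, x ∉ Set.range c ∧ x ∉ H) : False := by
  obtain ⟨x1, hx1, hadj1⟩ := h1
  obtain ⟨x2, hx2, hadj2⟩ := h2
  obtain ⟨s, t, hs, ht, hst, hA, hA1last, hA2last⟩ := hc.1.exists_arcs (ne_of_apply_ne c hne)
  rw [← hpm] at hA1last
  rw [← hp0] at hA2last
  obtain ⟨Q, hQnd, hQch, hQhead, hQlast, hQH⟩ :=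
    exists_list_of_connected_induce hH.2.2.1 hx1 hx2
  have hQ : 0 < Q.length := List.length_pos_iff.2 (by rintro rfl; simp at hQhead)
  set A1 := cycleArc c i1 s
  set A2 := cycleArc c i2 t
  set P := pathInterior p m
  have hAR : ∀ x ∈ A2 ++ A1, x ∈ Set.range c := by
    simp only [List.mem_append]
    rintro x (hx | hx) <;> exact mem_range_of_mem_cycleArc hx
  obtain ⟨hPA1ch, hPA1head⟩ := hp.isChain_pathInterior_append hm (l := A1.reverse)
    (List.isChain_reverse.2 ((hc.1.isChain_cycleArc _ _).imp fun _ _ h => h.symm))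
    (by rw [List.head?_reverse, hA1last])
  have hperm : (A2 ++ (P ++ A1.reverse)).Perm (A2 ++ A1 ++ P) := by
    rw [List.append_assoc]
    exact (List.perm_append_comm.trans ((List.reverse_perm A1).append_right P)).append_left A2
  have hnd : (Q ++ (A2 ++ (P ++ A1.reverse))).Nodup := by
    refine hQnd.append (hperm.nodup_iff.2 (hA.append hp.nodup_pathInterior
      fun x hxA hxP => (havoid x hxP).1 (hAR x hxA))) fun x hxQ hx => ?_
    rcases List.mem_append.1 (hperm.mem_iff.1 hx) with hxA | hxP
    · exact Set.disjoint_left.1 hH.2.1 (hQH x hxQ) (hAR x hxA)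
    · exact (havoid x hxP).2 (hQH x hxQ)
  have hch : (Q ++ (A2 ++ (P ++ A1.reverse))).IsChain G.Adj := by
    refine List.isChain_append.2 ⟨hQch, List.isChain_append.2 ⟨hc.1.isChain_cycleArc _ _,
      hPA1ch, ?_⟩, ?_⟩
    · rw [hA2last, hPA1head]
      simpa using hp.2 0 (by omega)
    · rw [hQlast, List.head?_append, head?_cycleArc _ ht]
      simpa using hadj2.symm
  have hcl : ∀ x ∈ (Q ++ (A2 ++ (P ++ A1.reverse))).getLast?,
      ∀ y ∈ (Q ++ (A2 ++ (P ++ A1.reverse))).head?, G.Adj x y := by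
    rw [List.getLast?_append, List.getLast?_append, List.getLast?_append, List.getLast?_reverse,
      head?_cycleArc _ hs, List.head?_append, hQhead]
    simpa using hadj1
  have hlen := hc.length_le_of_list hnd hch hcl
  simp only [List.length_append, List.length_reverse, length_cycleArc, length_pathInterior,
    A1, A2, P] at hlen
  omega

theorem IsLongestCycle.not_isCPath_pred (hc : IsLongestCycle G n c)
    (hH : IsCompOff G (Set.range c) H) {i1 i2 : ZMod n} (hne : c i1 ≠ c i2)
    (h1 : ∃ x ∈ H, G.Adj (c i1) x) (h2 : ∃ x ∈ H, G.Adj (c i2) x) {m : ℕ} {p : ℕ → α}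
    (hp : IsCPath G (Set.range c) m p) (hp0 : p 0 = c (i1 - 1))
    (hpm : p (m - 1) = c (i2 - 1)) : False := by
  obtain ⟨hm, hpath, -, -, hpR⟩ := hp
  by_cases hpH : ∃ j, 0 < j ∧ j < m - 1 ∧ p j ∈ H
  · obtain ⟨j, hj0, hjm, hjH⟩ := hpH
    refine hc.not_adj_comp_succ hH (j := i1 - 1)
      ⟨p 1, hH.apply_one_mem_of_isPathOn hpath hpR j hj0 hjm hjH, ?_⟩ (by simpa using h1)
    exact hp0 ▸ hpath.2 0 (by omega)
  · push Not at hpH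
    refine hc.false_of_pred_path_avoiding hH hne h1 h2 hm hpath hp0 hpm fun x hx => ?_
    obtain ⟨i, hi0, him, rfl⟩ := mem_pathInterior.1 hx
    exact ⟨hpR i hi0 him, hpH i hi0 him⟩

theorem IsLongestCycle.not_adj_pred (hc : IsLongestCycle G n c)
    (hH : IsCompOff G (Set.range c) H) {i1 i2 : ZMod n} (hne : c i1 ≠ c i2)
    (h1 : ∃ x ∈ H, G.Adj (c i1) x) (h2 : ∃ x ∈ H, G.Adj (c i2) x) :
    ¬ G.Adj (c (i1 - 1)) (c (i2 - 1)) := fun hadj =>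
  hc.not_isCPath_pred hH hne h1 h2 (isCPath_pair hadj ⟨_, rfl⟩ ⟨_, rfl⟩) rfl rfl

theorem IsCycleOn.comp_neg (hc : IsCycleOn G n c) : IsCycleOn G n (c ∘ Neg.neg) :=
  ⟨hc.1, hc.2.1.comp neg_injective, fun i => by
    simpa [neg_add_rev, add_comm] using (hc.2.2 (-(i + 1))).symm⟩

theorem IsLongestCycle.comp_neg (hc : IsLongestCycle G n c) :
    IsLongestCycle G n (c ∘ Neg.neg) :=
  ⟨hc.1.comp_neg, hc.2⟩

end LongestCycle

theorem stmt_2 (G : SimpleGraph V) (n : ℕ) (c : ZMod n → V)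
    (hc : IsLongestCycle G n c)
    (H : Set V) (hH : IsCompOff G (Set.range c) H)
    (i1 i2 : ZMod n) (hne : c i1 ≠ c i2)
    (h1 : ∃ x ∈ H, G.Adj (c i1) x) (h2 : ∃ x ∈ H, G.Adj (c i2) x) :
    (¬ ∃ (m : ℕ) (p : ℕ → V), IsCPath G (Set.range c) m p ∧
        p 0 = c (i1 - 1) ∧ p (m - 1) = c (i2 - 1)) ∧
    ¬ G.Adj (c (i1 - 1)) (c (i2 - 1)) ∧
    ¬ G.Adj (c (i1 + 1)) (c (i2 + 1)) := by
  refine ⟨fun ⟨m, p, hp, hp0, hpm⟩ => hc.not_isCPath_pred hH hne h1 h2 hp hp0 hpm,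
    hc.not_adj_pred hH hne h1 h2, ?_⟩
  have hH' : IsCompOff G (Set.range (c ∘ Neg.neg)) H := by
    rwa [neg_surjective.range_comp]
  simpa [sub_eq_add_neg, add_comm] using
    hc.comp_neg.not_adj_pred hH' (i1 := -i1) (i2 := -i2) (by simpa using hne)
      (by simpa using h1) (by simpa using h2)
end

section
/- Let G be a graph, C a longest cycle of G with a fixed orientation, H a component of G − C, and v1, v2 distinct vertices on C each having a neighbor in H, with |N_G(v1; H) ∪ N_G(v2; H)| ≥ 2. If v1v2⁻ is an edge of G, then neither v1⁻v1⁺², nor v1⁻²v1⁺ is an edge of G, and v1⁻v1⁺ is not an edge of G. -/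
open SimpleGraph

variable {V : Type*} [Fintype V] [DecidableEq V]

/-!
Let `a ≠ b` be neighbours of `v₁` and `v₂ = v₁⁺ˢ` in `H`, and `P` an `a`–`b` path inside `H`; it
has at least two vertices. No cycle built from `P` and arcs of `C` is longer than `C`. The cycle
`v₁ P v₂ C v₁` misses the `s - 1` inner vertices of the arc from `v₁` to `v₂`, so `|P| < s`, and
symmetrically `|P| < |C| - s`: both arcs between `v₁` and `v₂` are long. A chord `v₁⁻ᵖ v₁⁺ᵠ`
(`p, q ≥ 1`) then closes the cycle `v₁ P v₂ C v₁⁻ᵖ v₁⁺ᵠ C v₂⁻ v₁`, which misses only `p + q - 2`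
vertices of `C`; hence `|P| ≤ p + q - 2`, which rules out the three chords in question.
-/

section

omit [Fintype V] [DecidableEq V]

theorem Set.exists_ne_of_two_le_ncard_union {α : Type*} {s t : Set α} (hs : s.Nonempty)
    (ht : t.Nonempty) (h : 2 ≤ (s ∪ t).ncard) : ∃ a ∈ s, ∃ b ∈ t, a ≠ b := by
  by_contra! hst
  obtain ⟨x, hx⟩ := hs
  obtain ⟨y, hy⟩ := ht
  have hsub : s ∪ t ⊆ {y} := by
    rintro z (hz | hz)
    · exact hst z hz y hy
    · exact (hst x hx z hz).symm.trans (hst x hx y hy)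
  have := Set.ncard_le_ncard hsub
  rw [Set.ncard_singleton] at this
  omega

theorem SimpleGraph.Connected.exists_path_list_of_induce {G : SimpleGraph V} {H : Set V}
    (hH : (G.induce H).Connected) {a b : V} (ha : a ∈ H) (hb : b ∈ H) :
    ∃ P : List V, P.Nodup ∧ P.IsChain G.Adj ∧ (∀ x ∈ P, x ∈ H) ∧
      P.head? = some a ∧ P.getLast? = some b := by
  classical
  obtain ⟨p, hp⟩ := (hH.preconnected ⟨a, ha⟩ ⟨b, hb⟩).some.toPath
  refine ⟨p.support.map Subtype.val, hp.support_nodup.map Subtype.val_injective, ?_, ?_, ?_, ?_⟩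
  · exact (List.isChain_map _).2 p.isChain_adj_support
  · intro x hx
    obtain ⟨y, -, rfl⟩ := List.mem_map.1 hx
    exact y.2
  · rw [← p.cons_tail_support, List.map_cons, List.head?_cons]
  · rw [List.getLast?_map, List.getLast?_eq_some_getLast p.support_ne_nil, p.getLast_support]
    rfl

theorem ZMod.natCast_self_sub {n k : ℕ} (h : k ≤ n) : ((n - k : ℕ) : ZMod n) = -k := by
  rw [Nat.cast_sub h, ZMod.natCast_self, zero_sub]

namespace IsCycleOn

variable {G : SimpleGraph V} {n : ℕ} {c : ZMod n → V}

theorem injOn_add_natCast (hc : IsCycleOn G n c) (i : ZMod n) :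
    Set.InjOn (fun t : ℕ => c (i + t)) (Set.Iio n) := by
  intro a ha b hb h
  have := (ZMod.natCast_eq_natCast_iff' a b n).1 (add_left_cancel (hc.2.1 h))
  rwa [Nat.mod_eq_of_lt ha, Nat.mod_eq_of_lt hb] at this

theorem isChain_map_range' (hc : IsCycleOn G n c) (i : ZMod n) (a k : ℕ) :
    ((List.range' a k).map fun t : ℕ => c (i + t)).IsChain G.Adj := by
  rw [List.isChain_map]
  refine (List.isChain_range' a k 1).imp fun t _ h => ?_
  simpa [h, add_assoc] using hc.2.2 (i + t)

theorem adj_sub_one (hc : IsCycleOn G n c) (i : ZMod n) : G.Adj (c (i - 1)) (c i) := by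
  simpa using hc.2.2 (i - 1)

end IsCycleOn

namespace IsLongestCycle

variable {G : SimpleGraph V} {n : ℕ} {c : ZMod n → V}

theorem length_lt_of_isChain (hc : IsLongestCycle G n c) {x : V} {l : List V}
    (hnd : (x :: l).Nodup) (hch : (x :: l ++ [x]).IsChain G.Adj) (hl : 2 ≤ l.length) :
    l.length < n := by
  set m := l.length + 1
  let d : ZMod m → V := fun j => (x :: l)[j.val]'(ZMod.val_lt j)
  have hlen : (x :: l ++ [x]).length = m + 1 := by simp [m]
  have hd : ∀ k (hk : k ≤ m), (x :: l ++ [x])[k]'(by omega) = d k := by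
    intro k hk
    rcases hk.lt_or_eq with hk | rfl
    · rw [List.getElem_append_left hk]
      simp [d, ZMod.val_natCast, Nat.mod_eq_of_lt hk]
    · simp [d, m]
  refine hc.2 m d ⟨by omega, fun j j' h => ZMod.val_injective _ ((hnd.getElem_inj_iff).1 h),
    fun j => ?_⟩
  have hj := ZMod.val_lt j
  have := List.isChain_iff_getElem.1 hch j.val (by omega)
  rwa [hd _ hj.le, hd _ hj, Nat.cast_succ, ZMod.natCast_zmod_val] at this

theorem length_add_length_lt (hc : IsLongestCycle G n c) (i : ZMod n) {P : List V} {O : List ℕ}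
    (hP : ∀ x ∈ P, x ∉ Set.range c) (hPnd : P.Nodup) (hOnd : O.Nodup)
    (hO : ∀ t ∈ O, 0 < t ∧ t < n)
    (hch : (c i :: (P ++ O.map fun t : ℕ => c (i + t)) ++ [c i]).IsChain G.Adj)
    (hlen : 2 ≤ P.length + O.length) : P.length + O.length < n := by
  have hn : 0 < n := by have := hc.1.1; omega
  have hinj := hc.1.injOn_add_natCast i
  have hnd : (c i :: (P ++ O.map fun t : ℕ => c (i + t))).Nodup := by
    refine List.nodup_cons.2 ⟨?_, List.nodup_append.2 ⟨hPnd, hOnd.map_on ?_, ?_⟩⟩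
    · simp only [List.mem_append, List.mem_map, not_or, not_exists, not_and]
      refine ⟨fun h => hP _ h ⟨i, rfl⟩, fun t ht h => (hO t ht).1.ne' ?_⟩
      exact hinj (hO t ht).2 hn (by simpa using h)
    · exact fun a ha b hb h => hinj (hO a ha).2 (hO b hb).2 h
    · simp only [List.mem_map]
      rintro x hx _ ⟨t, -, rfl⟩ rfl
      exact hP _ hx ⟨_, rfl⟩
  simpa using hc.length_lt_of_isChain hnd hch (by simpa using hlen)

theorem length_lt_of_detour (hc : IsLongestCycle G n c) {i : ZMod n} {s : ℕ} (hs : 0 < s)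
    (hsn : s < n) {P : List V} {a b : V} (hP : ∀ x ∈ P, x ∉ Set.range c) (hPnd : P.Nodup)
    (hPch : P.IsChain G.Adj) (ha : P.head? = some a) (hb : P.getLast? = some b)
    (hia : G.Adj (c i) a) (hbs : G.Adj b (c (i + s))) : P.length < s := by
  have hns : n - s ≠ 0 := by omega
  have hP1 : 0 < P.length := List.length_pos_iff.2 (by rintro rfl; simp at ha)
  have hlast : G.Adj (c (i + ↑(n - 1))) (c i) := by
    rw [ZMod.natCast_self_sub (by omega), Nat.cast_one, ← sub_eq_add_neg]
    exact hc.1.adj_sub_one i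
  have := hc.length_add_length_lt i hP hPnd List.nodup_range' (O := List.range' s (n - s))
    (fun t ht => by rw [List.mem_range'_1] at ht; omega)
    (by simp [List.isChain_append, List.isChain_cons, ha, hb, List.head?_range',
      List.getLast?_range', show s + (n - s) = n by omega, hns, hia, hPch, hbs,
      hc.1.isChain_map_range', hlast])
    (by rw [List.length_range']; omega)
  rw [List.length_range'] at this
  omega

theorem length_add_two_le_of_chord (hc : IsLongestCycle G n c) {i : ZMod n} {s p q : ℕ}
    (hq : 0 < q) (hqs : q < s) (hp : 0 < p) (hsp : s + p ≤ n) {P : List V} {a b : V}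
    (hP : ∀ x ∈ P, x ∉ Set.range c) (hPnd : P.Nodup) (hPch : P.IsChain G.Adj)
    (ha : P.head? = some a) (hb : P.getLast? = some b) (hia : G.Adj (c i) a)
    (hbs : G.Adj b (c (i + s))) (his : G.Adj (c i) (c (i + s - 1)))
    (hpq : G.Adj (c (i - p)) (c (i + q))) : P.length + 2 ≤ p + q := by
  have hchord : G.Adj (c (i + ↑(n - p))) (c (i + q)) := by
    rwa [ZMod.natCast_self_sub (by omega), ← sub_eq_add_neg]
  have hlast : G.Adj (c (i + ↑(s - 1))) (c i) := by
    rw [Nat.cast_sub (by omega), Nat.cast_one, ← add_sub_assoc]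
    exact his.symm
  have := hc.length_add_length_lt i hP hPnd
    (O := List.range' s (n - p - s + 1) ++ List.range' q (s - q))
    (List.nodup_append.2 ⟨List.nodup_range', List.nodup_range', fun t ht t' ht' => by
      rw [List.mem_range'_1] at ht ht'; omega⟩)
    (fun t ht => by rw [List.mem_append, List.mem_range'_1, List.mem_range'_1] at ht; omega)
    (by simp [List.isChain_append, List.isChain_cons, ha, hb, List.head?_range',
      List.getLast?_range', show s + (n - p - s) = n - p by omega,
      show q + (s - q) - 1 = s - 1 by omega, show s - q ≠ 0 by omega,
      hia, hPch, hbs, hc.1.isChain_map_range', hchord, hlast])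
    (by rw [List.length_append, List.length_range', List.length_range']; omega)
  rw [List.length_append, List.length_range', List.length_range'] at this
  omega

end IsLongestCycle

end

theorem stmt_3 (G : SimpleGraph V) (n : ℕ) (c : ZMod n → V)
    (hc : IsLongestCycle G n c)
    (H : Set V) (hH : IsCompOff G (Set.range c) H)
    (i1 i2 : ZMod n) (hne : c i1 ≠ c i2)
    (h1 : ∃ x ∈ H, G.Adj (c i1) x) (h2 : ∃ x ∈ H, G.Adj (c i2) x)
    (hcard : 2 ≤ ({x | x ∈ H ∧ G.Adj (c i1) x} ∪ {x | x ∈ H ∧ G.Adj (c i2) x}).ncard)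
    (he : G.Adj (c i1) (c (i2 - 1))) :
    ¬ G.Adj (c (i1 - 1)) (c (i1 + 2)) ∧
    ¬ G.Adj (c (i1 - 2)) (c (i1 + 1)) ∧
    ¬ G.Adj (c (i1 - 1)) (c (i1 + 1)) := by
  obtain ⟨a, ⟨haH, ha⟩, b, ⟨hbH, hb⟩, hab⟩ := Set.exists_ne_of_two_le_ncard_union h1 h2 hcard
  obtain ⟨P, hPnd, hPch, hPH, hPa, hPb⟩ := hH.2.2.1.exists_path_list_of_induce haH hbH
  have hP2 : 2 ≤ P.length := by
    rcases P with _ | ⟨x, _ | ⟨y, P⟩⟩ <;> simp_all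
  have hPoff : ∀ x ∈ P, x ∉ Set.range c := fun x hx => Set.disjoint_left.1 hH.2.1 (hPH x hx)
  have : NeZero n := ⟨by have := hc.1.1; omega⟩
  obtain ⟨s, hsn, rfl⟩ : ∃ s < n, i2 = i1 + s := ⟨(i2 - i1).val, ZMod.val_lt _, by simp⟩
  have hs : 0 < s := Nat.pos_of_ne_zero (by rintro rfl; simp at hne)
  have hPs : P.length < s := hc.length_lt_of_detour hs hsn hPoff hPnd hPch hPa hPb ha hb.symm
  have hPns : P.length < n - s := by
    simpa using hc.length_lt_of_detour (i := i1 + s) (by omega) (by omega)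
      (by simpa using hPoff) (List.nodup_reverse.2 hPnd)
      (List.isChain_reverse.2 (hPch.imp fun _ _ h => h.symm))
      (by simpa using hPb) (by simpa using hPa) hb
      (by rwa [ZMod.natCast_self_sub hsn.le, add_neg_cancel_right, G.adj_comm])
  have hchord : ∀ p q : ℕ, 0 < q → q < s → 0 < p → s + p ≤ n →
      G.Adj (c (i1 - p)) (c (i1 + q)) → P.length + 2 ≤ p + q := fun _ _ hq hqs hp hsp =>
    hc.length_add_two_le_of_chord hq hqs hp hsp hPoff hPnd hPch hPa hPb ha hb.symm he
  refine ⟨fun h => ?_, fun h => ?_, fun h => ?_⟩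
  · have := hchord 1 2 (by omega) (by omega) (by omega) (by omega) (by simpa using h)
    omega
  · have := hchord 2 1 (by omega) (by omega) (by omega) (by omega) (by simpa using h)
    omega
  · have := hchord 1 1 (by omega) (by omega) (by omega) (by omega) (by simpa using h)
    omega
end

section
/- Let G be a graph, C a longest cycle of G with a fixed orientation, H a component of G − C, and v1, v2 distinct vertices on C each with a neighbor in H. If v1⁻ is adjacent to a vertex w on the oriented segment of C from v1 to v2⁻, then v2⁺ is not adjacent to w⁺. -/
open SimpleGraph

variable {V : Type*} [Fintype V] [DecidableEq V]

/-! If `v₁⁻ w` and `v₂⁺ w⁺` were both edges of `G`, then the walk that runs from `v₂` backwards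
along `C` to `w⁺`, jumps to `v₂⁺`, runs forwards to `v₁⁻`, jumps to `w` and runs backwards to `v₁`
is a path through all vertices of `C`. Closing it with a path through `H` from a neighbour of `v₁`
to a neighbour of `v₂` yields a cycle longer than `C`. -/
section

variable {α : Type*} {G : SimpleGraph α}

theorem exists_isCycleOn_of_isChain {L : List α} (h3 : 3 ≤ L.length) (hnd : L.Nodup)
    (hch : L.IsChain G.Adj) (hwrap : ∀ x ∈ L.getLast?, ∀ y ∈ L.head?, G.Adj x y) :
    ∃ d : ZMod L.length → α, IsCycleOn G L.length d := by
  have : NeZero L.length := ⟨by omega⟩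
  have : Fact (1 < L.length) := ⟨by omega⟩
  refine ⟨fun i => L[i.val]'(ZMod.val_lt i), h3,
    fun i j hij => ZMod.val_injective _ ((List.Nodup.getElem_inj_iff hnd).1 hij), fun i => ?_⟩
  have hval : (i + 1).val = (i.val + 1) % L.length := by rw [ZMod.val_add, ZMod.val_one]
  by_cases h : i.val + 1 < L.length
  · simp only [hval, Nat.mod_eq_of_lt h]
    exact List.isChain_iff_getElem.1 hch _ h
  · have hi : i.val = L.length - 1 := by have := ZMod.val_lt i; omega
    have h0 : (i + 1).val = 0 := by rw [hval, hi, Nat.sub_add_cancel (by omega), Nat.mod_self]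
    simp only [h0, hi]
    exact hwrap _ (by simp [List.getLast?_eq_getElem?]) _ (by simp [List.head?_eq_getElem?])

theorem exists_isChain_of_connected_induce {H : Set α} (hH : (G.induce H).Connected) {x y : α}
    (hx : x ∈ H) (hy : y ∈ H) :
    ∃ P : List α, P.Nodup ∧ P.IsChain G.Adj ∧ P.head? = some x ∧ P.getLast? = some y ∧
      ∀ z ∈ P, z ∈ H := by
  classical
  obtain ⟨p⟩ := hH.preconnected ⟨x, hx⟩ ⟨y, hy⟩
  let q := p.toPath.1.map (Embedding.induce H).toHom
  have hq : q.support = p.toPath.1.support.map Subtype.val := Walk.support_map _ _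
  refine ⟨q.support, (p.toPath.2.map Subtype.val_injective).support_nodup,
    q.isChain_adj_support, by rw [← q.cons_tail_support]; rfl, ?_, fun z hz => ?_⟩
  · rw [List.getLast?_eq_some_getLast q.support_ne_nil, Walk.getLast_support]; rfl
  · rw [hq, List.mem_map] at hz
    obtain ⟨z, -, rfl⟩ := hz
    exact z.2

variable {n : ℕ}

def arc (c : ZMod n → α) (a : ZMod n) (m : ℕ) : List α :=
  (List.range m).map fun o : ℕ => c (a + o)

variable {c : ZMod n → α} {a : ZMod n} {m : ℕ}

@[simp]
theorem arc_zero : arc c a 0 = [] := rfl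

@[simp]
theorem length_arc : (arc c a m).length = m := by simp [arc]

theorem arc_add (c : ZMod n → α) (a : ZMod n) (m m' : ℕ) :
    arc c a (m + m') = arc c a m ++ arc c (a + m) m' := by
  simp [arc, List.range_add, add_assoc]

@[simp]
theorem head?_arc_succ : (arc c a (m + 1)).head? = some (c a) := by
  simp [arc, List.range_succ_eq_map]

@[simp]
theorem getLast?_arc_succ : (arc c a (m + 1)).getLast? = some (c (a + m)) := by
  simp [arc, List.range_succ]

theorem mem_range_of_mem_arc {x : α} (hx : x ∈ arc c a m) : x ∈ Set.range c := by
  obtain ⟨o, -, rfl⟩ := List.mem_map.1 hx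
  exact ⟨_, rfl⟩

theorem nodup_arc (hc : Function.Injective c) (hm : m ≤ n) : (arc c a m).Nodup := by
  refine List.nodup_range.map_on fun o ho o' ho' h => ?_
  rw [List.mem_range] at ho ho'
  have := congrArg ZMod.val (add_left_cancel (hc h))
  rwa [ZMod.val_cast_of_lt (by omega), ZMod.val_cast_of_lt (by omega)] at this

theorem isChain_arc (hadj : ∀ i, G.Adj (c i) (c (i + 1))) : (arc c a m).IsChain G.Adj := by
  refine List.isChain_iff_getElem.2 fun i hi => ?_
  simpa [arc, add_assoc] using hadj (a + i)

theorem isChain_reverse_arc (hadj : ∀ i, G.Adj (c i) (c (i + 1))) :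
    (arc c a m).reverse.IsChain G.Adj :=
  List.isChain_reverse.2 ((isChain_arc hadj).imp fun _ _ h => h.symm)

/-- With `v₁ = c a`, `w = c (a + k)` and `v₂ = c (a + (k + l + 1))`, the path `Q` is
`v₂ ⋯ w⁺, v₂⁺ ⋯ v₁⁻, w ⋯ v₁`; its middle block, of `r` vertices, is empty when `v₂⁺ = v₁`. -/
theorem exists_perm_arc_isChain_of_crossing (hadj : ∀ i, G.Adj (c i) (c (i + 1)))
    (k l r : ℕ) (hn : n = k + l + r + 2) (hw : G.Adj (c (a - 1)) (c (a + k)))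
    (hW : G.Adj (c (a + (k + l + 1 : ℕ) + 1)) (c (a + k + 1))) :
    ∃ Q : List α, Q.Perm (arc c a n) ∧ Q.IsChain G.Adj ∧
      Q.head? = some (c (a + (k + l + 1 : ℕ))) ∧ Q.getLast? = some (c a) := by
  refine ⟨(arc c (a + (k + 1 : ℕ)) (l + 1)).reverse ++ arc c (a + (k + l + 2 : ℕ)) r ++
    (arc c a (k + 1)).reverse, ?_, ?_, ?_, ?_⟩
  · rw [show arc c a n = arc c a (k + 1 + (l + 1) + r) from congrArg _ (by omega),
      arc_add c a (k + 1 + (l + 1)), arc_add c a (k + 1),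
      show k + 1 + (l + 1) = k + l + 2 by ring]
    classical
    exact List.perm_iff_count.2 fun x => by simp only [List.count_append, List.count_reverse]; omega
  · have hB := isChain_reverse_arc (a := a + ((k + 1 : ℕ) : ZMod n)) (m := l + 1) hadj
    have hD := isChain_reverse_arc (a := a) (m := k + 1) hadj
    rcases r with _ | r
    · rw [arc_zero, List.append_nil]
      refine hB.append hD ?_
      simp only [List.getLast?_reverse, List.head?_reverse, head?_arc_succ, getLast?_arc_succ,
        Option.mem_some_iff]
      rintro _ rfl _ rfl
      simpa [add_assoc] using (hadj (a + (k : ℕ))).symm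
    · refine (hB.append (isChain_arc hadj) ?_).append hD ?_
      · simp only [List.getLast?_reverse, head?_arc_succ, Option.mem_some_iff]
        rintro _ rfl _ rfl
        convert hW.symm using 2 <;> push_cast <;> ring
      · rw [List.getLast?_append_of_ne_nil _ (List.ne_nil_of_length_pos (by simp))]
        simp only [List.head?_reverse, getLast?_arc_succ, Option.mem_some_iff]
        rintro _ rfl _ rfl
        have hsum : ((k + l + 2 + r + 1 : ℕ) : ZMod n) = 0 := by
          rw [← ZMod.natCast_self n]; congr 1; omega
        push_cast at hsum
        convert hw using 2
        push_cast
        linear_combination hsum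
  · simp only [List.append_assoc, List.head?_append, List.head?_reverse, getLast?_arc_succ,
      Option.some_or]
    congr 2; push_cast; ring
  · simp [List.getLast?_append]

theorem IsLongestCycle.false_of_detour (hc : IsLongestCycle G n c) {P Q : List α}
    (hP : P ≠ []) (hPnd : P.Nodup) (hPch : P.IsChain G.Adj) (hPc : ∀ x ∈ P, x ∉ Set.range c)
    (hQ : Q.Perm (arc c a n)) (hQch : Q.IsChain G.Adj)
    (hPQ : ∀ x ∈ P.getLast?, ∀ y ∈ Q.head?, G.Adj x y)
    (hQP : ∀ x ∈ Q.getLast?, ∀ y ∈ P.head?, G.Adj x y) : False := by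
  obtain ⟨⟨hn, hinj, -⟩, hmax⟩ := hc
  have hQlen : Q.length = n := by simp [hQ.length_eq]
  have hQ0 : Q ≠ [] := List.ne_nil_of_length_pos (by omega)
  have hPlen : 0 < P.length := List.length_pos_iff.2 hP
  have hnd : (P ++ Q).Nodup := List.nodup_append.2 ⟨hPnd, hQ.nodup_iff.2 (nodup_arc hinj le_rfl),
    fun x hx y hy hxy => hPc x hx (hxy ▸ mem_range_of_mem_arc (hQ.subset hy))⟩
  obtain ⟨d, hd⟩ := exists_isCycleOn_of_isChain (by rw [List.length_append]; omega) hnd (hPch.append hQch hPQ)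
    (by rwa [List.getLast?_append_of_ne_nil _ hQ0, List.head?_append_of_ne_nil _ hP])
  have := hmax _ d hd
  simp only [List.length_append] at this
  omega

theorem exists_eq_add_of_mem_seg [NeZero n] {s t j : ZMod n} (hst : s ≠ t)
    (hj : j ∈ seg n s (t - 1)) :
    ∃ k l r : ℕ, n = k + l + r + 2 ∧ j = s + k ∧ t = s + (k + l + 1 : ℕ) := by
  obtain ⟨k, rfl, hk⟩ := hj
  obtain ⟨d, hd, rfl⟩ : ∃ d : ℕ, d < n ∧ t = s + d :=
    ⟨(t - s).val, ZMod.val_lt _, by rw [ZMod.natCast_zmod_val]; ring⟩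
  have hd0 : d ≠ 0 := by rintro rfl; simp at hst
  have hkd : k < d := by
    by_contra! h
    exact hk (d - 1) (by omega) (by rw [Nat.cast_pred (by omega)]; ring)
  exact ⟨k, d - k - 1, n - 1 - d, by omega, rfl, by congr 2; omega⟩

end

theorem stmt_4 (G : SimpleGraph V) (n : ℕ) (c : ZMod n → V)
    (hc : IsLongestCycle G n c)
    (H : Set V) (hH : IsCompOff G (Set.range c) H)
    (i1 i2 : ZMod n) (hne : c i1 ≠ c i2)
    (h1 : ∃ x ∈ H, G.Adj (c i1) x) (h2 : ∃ x ∈ H, G.Adj (c i2) x) :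
    ∀ j ∈ seg n i1 (i2 - 1),
      G.Adj (c (i1 - 1)) (c j) → ¬ G.Adj (c (i2 + 1)) (c (j + 1)) := by
  intro j hj hw hW
  have : NeZero n := ⟨by have := hc.1.1; omega⟩
  obtain ⟨k, l, r, hn, rfl, rfl⟩ := exists_eq_add_of_mem_seg (fun h => hne (congrArg c h)) hj
  obtain ⟨-, hHC, hHconn, -⟩ := hH
  obtain ⟨x1, hx1H, hx1⟩ := h1
  obtain ⟨x2, hx2H, hx2⟩ := h2
  obtain ⟨P, hPnd, hPch, hPh, hPl, hPH⟩ := exists_isChain_of_connected_induce hHconn hx1H hx2H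
  obtain ⟨Q, hQ, hQch, hQh, hQl⟩ := exists_perm_arc_isChain_of_crossing hc.1.2.2 k l r hn hw hW
  refine hc.false_of_detour (List.ne_nil_of_mem (List.mem_of_mem_head? hPh)) hPnd hPch
    (fun x hx hxc => Set.disjoint_left.1 hHC (hPH x hx) hxc) hQ hQch ?_ ?_
  · simpa [hPl, hQh] using hx2.symm
  · simpa [hPh, hQl] using hx1
end

section
/- Let G be a P5-free graph, C a cycle in G with a fixed orientation, H a component of G − C, and v a vertex of C with a neighbor in H such that some vertex of H is not adjacent to v. If no vertex of the oriented segment of C from v⁺ to a (for some vertex a of C distinct from v and v⁺) has a neighbor in H, then every vertex of that segment from v⁺ to a is adjacent to v. -/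
open SimpleGraph

variable {V : Type*} [Fintype V] [DecidableEq V]

lemma find_edge_aux {G : SimpleGraph V} (v : V) (H : Set V) :
    ∀ (a b : H) (_ : (G.induce H).Walk a b), G.Adj v a.1 → ¬ G.Adj v b.1 →
      ∃ x y, x ∈ H ∧ y ∈ H ∧ G.Adj x y ∧ G.Adj v x ∧ ¬ G.Adj v y := by
  intro a b w
  induction w with
  | nil => intro h1 h2; exact absurd h1 h2
  | @cons a a' b h w ih =>
    intro h1 h2
    by_cases hm : G.Adj v a'.1
    · exact ih hm h2
    · exact ⟨a.1, a'.1, a.2, a'.2, h, h1, hm⟩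

lemma buildP5 {G : SimpleGraph V} (hG : P5Free G) (v0 v1 v2 v3 v4 : V)
    (d01 : v0 ≠ v1) (d02 : v0 ≠ v2) (d03 : v0 ≠ v3) (d04 : v0 ≠ v4)
    (d12 : v1 ≠ v2) (d13 : v1 ≠ v3) (d14 : v1 ≠ v4)
    (d23 : v2 ≠ v3) (d24 : v2 ≠ v4) (d34 : v3 ≠ v4)
    (a01 : G.Adj v0 v1) (a12 : G.Adj v1 v2) (a23 : G.Adj v2 v3) (a34 : G.Adj v3 v4)
    (n02 : ¬ G.Adj v0 v2) (n03 : ¬ G.Adj v0 v3) (n04 : ¬ G.Adj v0 v4)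
    (n13 : ¬ G.Adj v1 v3) (n14 : ¬ G.Adj v1 v4) (n24 : ¬ G.Adj v2 v4) : False := by
  apply hG
  refine ⟨fun m => [v0, v1, v2, v3, v4].getD m v0, ⟨?_, ?_⟩, ?_⟩
  · intro a b ha hb hab
    interval_cases a <;> interval_cases b <;> simp_all
  · intro a ha
    have ha' : a < 4 := by omega
    interval_cases a <;> simpa
  · intro a b ha hb hab
    interval_cases a <;> interval_cases b <;>
      simp_all [G.adj_comm v0 v1, G.adj_comm v1 v2, G.adj_comm v2 v3, G.adj_comm v3 v4,
        G.adj_comm v0 v2, G.adj_comm v0 v3, G.adj_comm v0 v4, G.adj_comm v1 v3,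
        G.adj_comm v1 v4, G.adj_comm v2 v4]

theorem stmt_5 (G : SimpleGraph V) (hG : P5Free G)
    (n : ℕ) (c : ZMod n → V) (hc : IsCycleOn G n c)
    (H : Set V) (hH : IsCompOff G (Set.range c) H)
    (i : ZMod n)
    (hv : ∃ x ∈ H, G.Adj (c i) x)
    (hnon : ∃ x ∈ H, ¬ G.Adj (c i) x)
    (j : ZMod n) (hji : j ≠ i) (hji1 : j ≠ i + 1)
    (hseg : ∀ k ∈ seg n (i + 1) j, ¬ ∃ x ∈ H, G.Adj (c k) x) :
    ∀ k ∈ seg n (i + 1) j, G.Adj (c i) (c k) := by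
  classical
  obtain ⟨hn3, hcinj, hcadj⟩ := hc
  have hnpos : 0 < n := by omega
  have : NeZero n := ⟨by omega⟩
  obtain ⟨x0, hx0H, hx0⟩ := hv
  obtain ⟨y0, hy0H, hy0⟩ := hnon
  obtain ⟨hHne, hdisj, hconn, hcomp⟩ := hH
  -- find an edge x y in H with x adjacent to c i and y not
  obtain ⟨x, y, hxH, hyH, hxy, hvx, hvy⟩ :=
    find_edge_aux (c i) H ⟨x0, hx0H⟩ ⟨y0, hy0H⟩
      (hconn.preconnected ⟨x0, hx0H⟩ ⟨y0, hy0H⟩).some hx0 hy0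
  have hHc : ∀ z ∈ H, ∀ m : ZMod n, z ≠ c m := by
    intro z hz m h
    exact absurd ⟨m, h.symm⟩ (Set.disjoint_left.mp hdisj hz)
  -- main induction
  have key : ∀ k' : ℕ, (∀ m : ℕ, m < k' → (i + 1) + (m : ZMod n) ≠ j) →
      G.Adj (c i) (c ((i + 1) + (k' : ZMod n))) := by
    intro k'
    induction k' with
    | zero => intro _; simpa using hcadj i
    | succ k' ih =>
      intro hcond
      have ha : G.Adj (c i) (c ((i + 1) + (k' : ZMod n))) :=
        ih (fun m hm => hcond m (by omega))
      set a : ZMod n := (i + 1) + (k' : ZMod n) with ha_def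
      set b : ZMod n := (i + 1) + ((k' + 1 : ℕ) : ZMod n) with hb_def
      -- bound k' + 2 < n
      have hm0 : (i + 1) + (((j - (i + 1)).val : ℕ) : ZMod n) = j := by
        rw [ZMod.natCast_val, ZMod.cast_id]; ring
      have hm0lt : (j - (i + 1)).val < n := ZMod.val_lt _
      have hm0ge : k' + 1 ≤ (j - (i + 1)).val := by
        by_contra hlt
        exact hcond _ (by omega) hm0
      have hm0ne : (j - (i + 1)).val ≠ n - 1 := by
        intro h
        apply hji
        have : ((n - 1 : ℕ) : ZMod n) = -1 := by
          have : ((n : ℕ) : ZMod n) = 0 := ZMod.natCast_self n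
          rw [Nat.cast_sub (by omega), this]; simp
        rw [← hm0, h, this]; ring
      have hk2 : k' + 2 < n := by omega
      have hb_ne_i : b ≠ i := by
        intro h
        have : (((k' + 2 : ℕ)) : ZMod n) = 0 := by
          have := sub_eq_zero.mpr h
          rw [hb_def] at this
          rw [show (((k' + 2 : ℕ)) : ZMod n) = (i + 1) + ((k' + 1 : ℕ) : ZMod n) - i by
            push_cast; ring]
          exact this
        rw [ZMod.natCast_eq_zero_iff] at this
        have := Nat.le_of_dvd (by omega) this
        omega
      have ha_ne_i : a ≠ i := by
        intro h
        have : (((k' + 1 : ℕ)) : ZMod n) = 0 := by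
          have := sub_eq_zero.mpr h
          rw [ha_def] at this
          rw [show (((k' + 1 : ℕ)) : ZMod n) = (i + 1) + (k' : ZMod n) - i by
            push_cast; ring]
          exact this
        rw [ZMod.natCast_eq_zero_iff] at this
        have := Nat.le_of_dvd (by omega) this
        omega
      have hab : a + 1 = b := by rw [ha_def, hb_def]; push_cast; ring
      have ha_ne_b : a ≠ b := by
        intro h
        rw [← hab, left_eq_add] at h
        have : ((1 : ℕ) : ZMod n) = 0 := by exact_mod_cast h
        rw [ZMod.natCast_eq_zero_iff] at this
        have := Nat.le_of_dvd (by omega) this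
        omega
      have haseg : a ∈ seg n (i + 1) j :=
        ⟨k', rfl, fun m hm => hcond m (by omega)⟩
      have hbseg : b ∈ seg n (i + 1) j := ⟨k' + 1, rfl, hcond⟩
      have hna : ∀ z ∈ H, ¬ G.Adj (c a) z := by
        intro z hz h; exact hseg a haseg ⟨z, hz, h⟩
      have hnb : ∀ z ∈ H, ¬ G.Adj (c b) z := by
        intro z hz h; exact hseg b hbseg ⟨z, hz, h⟩
      by_contra hnadj
      exact buildP5 hG y x (c i) (c a) (c b)
        (G.ne_of_adj hxy).symm (hHc y hyH i) (hHc y hyH a) (hHc y hyH b)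
        (hHc x hxH i) (hHc x hxH a) (hHc x hxH b)
        (fun h => ha_ne_i (hcinj h).symm) (fun h => hb_ne_i (hcinj h).symm)
        (fun h => ha_ne_b (hcinj h))
        hxy.symm hvx.symm ha (hab ▸ hcadj a)
        (fun h => hvy h.symm) (fun h => hna y hyH h.symm) (fun h => hnb y hyH h.symm)
        (fun h => hna x hxH h.symm) (fun h => hnb x hxH h.symm)
        hnadj
  intro k hk
  obtain ⟨k', rfl, hcond⟩ := hk
  exact key k' hcond
end

section
/- Let G be a {K4⁻}-free graph (G contains no induced subgraph isomorphic to K4 minus an edge). Let Q be a path in G starting at a vertex v such that v is adjacent to every other vertex of Q. Then the vertex set of Q induces a complete subgraph of G. -/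
open SimpleGraph

variable {V : Type*} [Fintype V] [DecidableEq V]

theorem stmt_6 (G : SimpleGraph V) (hG : K4mFree G)
    (m : ℕ) (q : ℕ → V) (hq : IsPathOn G m q)
    (hv : ∀ i, 0 < i → i < m → G.Adj (q 0) (q i)) :
    ∀ i j, i < m → j < m → q i ≠ q j → G.Adj (q i) (q j) := by
  obtain ⟨inj, adjc⟩ := hq
  have key : ∀ d i, 0 < i → i + d < m → 0 < d → G.Adj (q i) (q (i + d)) := by
    intro d
    induction d with
    | zero => intro i _ _ h; omega
    | succ d ih =>
      intro i hi hm hd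
      rcases Nat.eq_zero_or_pos d with rfl | hd0
      · simpa using adjc i (by omega)
      · have h1 : G.Adj (q i) (q (i + d)) := ih i hi (by omega) hd0
        by_contra hcon
        apply hG
        have ne : ∀ a b : ℕ, a < m → b < m → a ≠ b → q a ≠ q b := by
          intro a b ha hb hab h; exact hab (inj a b ha hb h)
        refine ⟨q (i + d), q 0, q i, q (i + d + 1),
          ne _ _ (by omega) (by omega) (by omega),
          ne _ _ (by omega) (by omega) (by omega),
          ne _ _ (by omega) (by omega) (by omega),
          ne _ _ (by omega) (by omega) (by omega),
          ne _ _ (by omega) (by omega) (by omega),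
          ne _ _ (by omega) (by omega) (by omega),
          (hv (i + d) (by omega) (by omega)).symm,
          h1.symm,
          adjc (i + d) (by omega),
          hv i hi (by omega),
          hv (i + d + 1) (by omega) (by omega),
          hcon⟩
  have main : ∀ i j, i < j → j < m → G.Adj (q i) (q j) := by
    intro i j hij hj
    rcases Nat.eq_zero_or_pos i with rfl | hi
    · exact hv j (by omega) hj
    · have := key (j - i) i hi (by omega) (by omega)
      rwa [show i + (j - i) = j by omega] at this
  intro i j hi hj hne
  rcases lt_trichotomy i j with h | h | h
  · exact main i j h hj
  · exact absurd (congrArg q h) hne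
  · exact (main j i h hi).symm
end

section
/- Let G be a {K4⁻}-free graph, Q a path in G starting at a vertex v such that v is adjacent to every other vertex of Q, and let a be a vertex of G not on Q. Then either every vertex of Q is adjacent to a, or a has at most one neighbor on Q. -/
open SimpleGraph

variable {V : Type*} [Fintype V] [DecidableEq V]

private lemma k4m_rule {V : Type*} [Fintype V] [DecidableEq V] {G : SimpleGraph V}
    (hG : K4mFree G) {x y c d : V} (hxy : G.Adj x y) (hxc : G.Adj x c) (hxd : G.Adj x d)
    (hyc : G.Adj y c) (hyd : G.Adj y d) (hcd : c ≠ d) : G.Adj c d := by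
  by_contra h
  exact hG ⟨x, y, c, d, hxy.ne, hxc.ne, hxd.ne, hyc.ne, hyd.ne, hcd, hxy, hxc, hxd, hyc, hyd, h⟩

theorem stmt_7 (G : SimpleGraph V) (hG : K4mFree G)
    (m : ℕ) (q : ℕ → V) (hq : IsPathOn G m q)
    (hv : ∀ i, 0 < i → i < m → G.Adj (q 0) (q i))
    (a : V) (ha : ∀ i, i < m → a ≠ q i) :
    (∀ i, i < m → G.Adj a (q i)) ∨
    (∀ i j, i < m → j < m → G.Adj a (q i) → G.Adj a (q j) → i = j) := by
  have hinj := hq.1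
  have hpe := hq.2
  have hne : ∀ i j : ℕ, i < m → j < m → i ≠ j → q i ≠ q j := by
    intro i j hi hj hij h
    exact hij (hinj i j hi hj h)
  -- vertices q i, i ≥ 1, form a clique
  have clique : ∀ i j : ℕ, 1 ≤ i → i < j → j < m → G.Adj (q i) (q j) := by
    intro i j hi hij hj
    induction j with
    | zero => omega
    | succ j ih =>
      rcases Nat.lt_or_ge i j with h | h
      · have hj' : j < m := by omega
        have hij' : G.Adj (q i) (q j) := ih h hj'
        exact k4m_rule hG (hv j (by omega) hj') (hv i (by omega) (by omega))
          (hv (j+1) (by omega) hj) hij'.symm (hpe j hj)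
          (hne i (j+1) (by omega) hj (by omega))
      · have : i = j := by omega
        subst this
        exact hpe i hj
  by_cases hone : ∀ i j, i < m → j < m → G.Adj a (q i) → G.Adj a (q j) → i = j
  · exact Or.inr hone
  push_neg at hone
  obtain ⟨i, j, hi, hj, hai, haj, hij⟩ := hone
  left
  -- wlog i < j
  have key : ∀ i j : ℕ, i < j → j < m → G.Adj a (q i) → G.Adj a (q j) →
      ∀ k, k < m → G.Adj a (q k) := by
    clear hai haj hij hi hj
    intro i j hij hj hai haj
    have hi : i < m := by omega
    have ha0 : G.Adj a (q 0) := by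
      rcases Nat.eq_zero_or_pos i with h0 | h0
      · subst h0; exact hai
      · have hqq : G.Adj (q i) (q j) := clique i j h0 hij hj
        exact (k4m_rule hG hqq (hv i h0 hi).symm hai.symm (hv j (by omega) hj).symm
          haj.symm (Ne.symm (ha 0 (by omega)))).symm
    intro k hk
    rcases Nat.eq_zero_or_pos k with hk0 | hk0
    · subst hk0; exact ha0
    rcases eq_or_ne k j with hkj | hkj
    · subst hkj; exact haj
    have hqq : G.Adj (q j) (q k) := by
      rcases Nat.lt_or_ge j k with h | h
      · exact clique j k (by omega) h hk
      · exact (clique k j hk0 (by omega) hj).symm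
    exact k4m_rule hG (hv j (by omega) hj) ha0.symm (hv k hk0 hk) haj.symm hqq
      (ha k hk)
  rcases Nat.lt_or_ge i j with h | h
  · exact key i j h hj hai haj
  · exact key j i (by omega) hi haj hai
end

section
/- Every 2-connected complete multipartite graph containing a triangle has a dominating cycle. -/
open SimpleGraph

variable {V : Type*} [Fintype V] [DecidableEq V]

/-!
Let `P` be a largest part and `O` the set of remaining vertices. Every edge meets `O`, so a cycle
through all of `O` is dominating, and the triangle puts at least two vertices in `O`. Keep
`min |P| |O|` vertices of `P`: the complete multipartite graph induced by them and `O` has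
`N ≥ 3` vertices and no part with more than `N / 2` of them. List its vertices part by part,
a largest part first, as `v 0, …, v (N - 1)`, and visit them in the order
`v 0, v h, v 1, v (h + 1), …` with `h = ⌈N / 2⌉`. Consecutive vertices of this tour are too
far apart in the list to lie in a common part, so the tour is a Hamiltonian cycle.
-/

open Finset

/-- Position `j` of the cyclic order `0, h, 1, h + 1, 2, h + 2, …` of `{0, …, N - 1}`,
where `h = ⌈N / 2⌉`. -/
def zigzag (N j : ℕ) : ℕ := if j % 2 = 0 then j / 2 else (N + 1) / 2 + j / 2

/-- Index pairs `i < j` that can be consecutive in the order `zigzag N`: for even `N`, the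
distance `N / 2 - 1` only occurs away from both ends of `{0, …, N - 1}`. -/
def FarApart (N i j : ℕ) : Prop :=
  N < 2 * (j - i + 1) ∨ (2 * (j - i + 1) = N ∧ 0 < i ∧ j + 1 < N)

lemma zigzag_lt {N j : ℕ} (hj : j < N) : zigzag N j < N := by
  unfold zigzag; split <;> omega

lemma zigzag_injOn (N : ℕ) : Set.InjOn (zigzag N) (Set.Iio N) := by
  intro i hi j hj
  simp only [Set.mem_Iio] at hi hj
  unfold zigzag; split <;> split <;> omega

lemma zigzag_surjOn (N : ℕ) : Set.SurjOn (zigzag N) (Set.Iio N) (Set.Iio N) := by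
  intro p hp
  simp only [Set.mem_Iio] at hp
  by_cases hph : p < (N + 1) / 2
  · exact ⟨2 * p, by simp only [Set.mem_Iio]; omega, by unfold zigzag; split <;> omega⟩
  · exact ⟨2 * (p - (N + 1) / 2) + 1, by simp only [Set.mem_Iio]; omega,
      by unfold zigzag; split <;> omega⟩

lemma zigzag_farApart {N v : ℕ} (hN : 3 ≤ N) (hv : v < N) :
    (zigzag N v < zigzag N ((v + 1) % N) ∧
      FarApart N (zigzag N v) (zigzag N ((v + 1) % N))) ∨
    (zigzag N ((v + 1) % N) < zigzag N v ∧
      FarApart N (zigzag N ((v + 1) % N)) (zigzag N v)) := by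
  unfold FarApart zigzag
  rcases Nat.lt_or_ge (v + 1) N with hlt | hge
  · rw [Nat.mod_eq_of_lt hlt]; split <;> split <;> omega
  · rw [show v + 1 = N by omega, Nat.mod_self]; split <;> split <;> omega

lemma exists_isCycleOn_of_farApart_adj {α : Type*} (G : SimpleGraph α) {N : ℕ} (hN : 3 ≤ N)
    (f : ℕ → α) (hf : Set.InjOn f (Set.Iio N))
    (hadj : ∀ i j, i < j → j < N → FarApart N i j → G.Adj (f i) (f j)) :
    ∃ c : ZMod N → α, IsCycleOn G N c ∧ f '' Set.Iio N ⊆ Set.range c := by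
  have : NeZero N := ⟨by omega⟩
  have hval : ∀ x : ZMod N, (x + 1).val = (x.val + 1) % N := fun x => by
    rw [ZMod.val_add, ZMod.val_one_eq_one_mod, Nat.add_mod_mod]
  refine ⟨fun x => f (zigzag N x.val), ⟨hN, fun x y hxy => ?_, fun x => ?_⟩, ?_⟩
  · exact ZMod.val_injective N <| zigzag_injOn N (ZMod.val_lt x) (ZMod.val_lt y) <|
      hf (zigzag_lt (ZMod.val_lt x)) (zigzag_lt (ZMod.val_lt y)) hxy
  · simp only [hval]
    rcases zigzag_farApart hN (ZMod.val_lt x) with ⟨hlt, hfar⟩ | ⟨hlt, hfar⟩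
    · exact hadj _ _ hlt (zigzag_lt (Nat.mod_lt _ (by omega))) hfar
    · exact (hadj _ _ hlt (zigzag_lt (ZMod.val_lt x)) hfar).symm
  · rintro _ ⟨p, hp, rfl⟩
    obtain ⟨j, hj, rfl⟩ := zigzag_surjOn N hp
    refine ⟨(j : ZMod N), ?_⟩
    simp only [ZMod.val_natCast, Nat.mod_eq_of_lt (Set.mem_Iio.mp hj)]

lemma Finset.exists_bijOn_monotoneOn {α : Type*} [Nonempty α] (S : Finset α) (k : α → ℕ) :
    ∃ f : ℕ → α, Set.BijOn f (Set.Iio #S) S ∧ MonotoneOn (k ∘ f) (Set.Iio #S) := by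
  set L := S.toList.mergeSort (fun u v => decide (k u ≤ k v))
  have hperm : L.Perm S.toList := List.mergeSort_perm _ _
  have hlen : L.length = #S := by rw [hperm.length_eq, length_toList]
  have hsorted : L.Pairwise (fun u v => k u ≤ k v) := by
    simpa using List.pairwise_mergeSort (le := fun u v => decide (k u ≤ k v))
      (by simp only [decide_eq_true_eq]; omega)
      (by simp only [Bool.or_eq_true, decide_eq_true_eq]; omega) S.toList
  have hget : ∀ i (hi : i < #S), L.getD i (Classical.arbitrary α) = L[i] :=
    fun i hi => List.getD_eq_getElem _ _ (hlen ▸ hi)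
  refine ⟨fun i => L.getD i (Classical.arbitrary α), ⟨fun i hi => ?_, fun i hi j hj hij => ?_,
    fun v hv => ?_⟩, fun i hi j hj hij => ?_⟩
  · simp only [Set.mem_Iio] at hi
    simp only [hget i hi, mem_coe, ← mem_toList, ← hperm.mem_iff, List.getElem_mem]
  · simp only [Set.mem_Iio] at hi hj
    simp only [hget i hi, hget j hj] at hij
    exact (List.Nodup.getElem_inj_iff (hperm.nodup_iff.mpr S.nodup_toList)).mp hij
  · obtain ⟨i, hi, rfl⟩ := List.mem_iff_getElem.mp (hperm.mem_iff.mpr (mem_toList.mpr hv))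
    exact ⟨i, hlen ▸ hi, hget i (hlen ▸ hi)⟩
  · simp only [Set.mem_Iio] at hi hj
    simp only [Function.comp, hget i hi, hget j hj]
    rcases hij.lt_or_eq with hij | rfl
    · exact List.pairwise_iff_getElem.mp hsorted i j _ _ hij
    · rfl

lemma image_Icc_subset_fiber {α : Type*} [DecidableEq α] {S : Finset α} {k : α → ℕ}
    {f : ℕ → α} (hf : Set.MapsTo f (Set.Iio #S) S) (hmono : MonotoneOn (k ∘ f) (Set.Iio #S))
    {i j : ℕ} (hj : j < #S) (heq : k (f i) = k (f j)) :
    (Icc i j).image f ⊆ {u ∈ S | k u = k (f i)} := by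
  simp only [subset_iff, mem_image, mem_Icc, mem_filter]
  rintro _ ⟨l, ⟨hil, hlj⟩, rfl⟩
  have hl : l ∈ Set.Iio #S := Set.mem_Iio.mpr (by omega)
  exact ⟨hf hl, le_antisymm (heq ▸ hmono hl (Set.mem_Iio.mpr hj) hlj)
    (hmono (Set.mem_Iio.mpr (by omega)) hl hil)⟩

lemma key_ne_of_farApart {α : Type*} [DecidableEq α] {S : Finset α} {k : α → ℕ}
    {f : ℕ → α} (hf : Set.BijOn f (Set.Iio #S) S) (hmono : MonotoneOn (k ∘ f) (Set.Iio #S))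
    (hhalf : ∀ v ∈ S, 2 * #{u ∈ S | k u = k v} ≤ #S)
    (hfirst : ∀ v ∈ S, #{u ∈ S | k u = k v} ≤ #{u ∈ S | k u = k (f 0)})
    {i j : ℕ} (hij : i < j) (hj : j < #S) (hfar : FarApart #S i j) : k (f i) ≠ k (f j) := by
  intro heq
  have hmem : ∀ l, l < #S → f l ∈ S := fun l hl => hf.mapsTo (Set.mem_Iio.mpr hl)
  set F := {u ∈ S | k u = k (f i)}
  have hsub : (Icc i j).image f ⊆ F := image_Icc_subset_fiber hf.mapsTo hmono hj heq
  have hcard : #((Icc i j).image f) = j + 1 - i := by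
    rw [card_image_of_injOn (hf.injOn.mono fun l hl => by
      simp only [coe_Icc, Set.mem_Icc, Set.mem_Iio] at hl ⊢; omega), Nat.card_Icc]
  have hF : 2 * #F ≤ #S := hhalf (f i) (hmem i (by omega))
  obtain ⟨hNeq, hi0, hjN⟩ : 2 * (j - i + 1) = #S ∧ 0 < i ∧ j + 1 < #S := by
    have := card_le_card hsub
    unfold FarApart at hfar
    omega
  -- `F` is exactly the block `f i, …, f j`, so neither end of the enumeration lies in it.
  have hFeq : (Icc i j).image f = F := eq_of_subset_of_card_le hsub (by omega)
  have hout : ∀ l, l < #S → (l < i ∨ j < l) → k (f l) ≠ k (f i) := by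
    intro l hl hlij hkl
    have hlF : f l ∈ F := mem_filter.mpr ⟨hmem l hl, hkl⟩
    rw [← hFeq] at hlF
    obtain ⟨m, hm, hml⟩ := mem_image.mp hlF
    rw [mem_Icc] at hm
    have := hf.injOn (Set.mem_Iio.mpr (by omega)) (Set.mem_Iio.mpr hl) hml
    omega
  have h0 := hout 0 (by omega) (by omega)
  have hlast := hout (#S - 1) (by omega) (by omega)
  have h0i := hmono (Set.mem_Iio.mpr (by omega)) (Set.mem_Iio.mpr (by omega)) (Nat.zero_le i)
  have hilast := hmono (Set.mem_Iio.mpr (by omega)) (Set.mem_Iio.mpr (by omega))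
    (show i ≤ #S - 1 by omega)
  simp only [Function.comp] at h0i hilast
  -- The part of `f 0` is at least as large as `F`, and both miss `f (#S - 1)`.
  set C := {u ∈ S | k u = k (f 0)}
  have hdisj : Disjoint C F := disjoint_filter.mpr fun u _ hu => by omega
  have hCF : C ∪ F ⊆ S.erase (f (#S - 1)) := by
    intro u hu
    simp only [C, F, mem_union, mem_filter] at hu
    refine mem_erase.mpr ⟨?_, by rcases hu with hu | hu <;> exact hu.1⟩
    rintro rfl
    omega
  have := card_le_card hCF
  rw [card_union_of_disjoint hdisj, card_erase_of_mem (hmem _ (by omega))] at this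
  have : #F ≤ #C := hfirst (f i) (hmem i (by omega))
  have : #F = j + 1 - i := hFeq ▸ hcard
  omega

/-- A complete multipartite graph on `S`, with the fibres of `k` as parts, is Hamiltonian as soon
as no part has more than half of its vertices. -/
lemma exists_isCycleOn_of_two_mul_card_fiber_le {α : Type*} [DecidableEq α] (G : SimpleGraph α)
    (S : Finset α) (k : α → ℕ) (hS : 3 ≤ #S)
    (hadj : ∀ u ∈ S, ∀ v ∈ S, k u ≠ k v → G.Adj u v)
    (hhalf : ∀ v ∈ S, 2 * #{u ∈ S | k u = k v} ≤ #S) :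
    ∃ c : ZMod #S → α, IsCycleOn G #S c ∧ ↑S ⊆ Set.range c := by
  obtain ⟨v₀, hv₀, hmax⟩ := exists_max_image S (fun v => #{u ∈ S | k u = k v})
    (card_pos.mp (by omega))
  have : Nonempty α := ⟨v₀⟩
  -- Re-key so that a largest part comes first in the sorted enumeration.
  set k' : α → ℕ := fun v => if k v = k v₀ then 0 else k v + 1
  have hk' : ∀ u v, k' u = k' v ↔ k u = k v := fun u v => by grind
  have hfiber : ∀ v, {u ∈ S | k' u = k' v} = {u ∈ S | k u = k v} :=
    fun v => filter_congr fun u _ => hk' u v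
  obtain ⟨f, hf, hmono⟩ := S.exists_bijOn_monotoneOn k'
  have hf0 : k' (f 0) = k' v₀ := by
    obtain ⟨l, hl, rfl⟩ := hf.surjOn hv₀
    have := hmono (Set.mem_Iio.mpr (by omega)) hl (Nat.zero_le l)
    simp only [Function.comp, k', if_pos rfl] at this ⊢
    omega
  obtain ⟨c, hc, hrange⟩ := exists_isCycleOn_of_farApart_adj G hS f hf.injOn
    fun i j hij hj hfar => hadj _ (hf.mapsTo (Set.mem_Iio.mpr (by omega))) _
      (hf.mapsTo (Set.mem_Iio.mpr hj)) fun hk => key_ne_of_farApart hf hmono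
        (fun v hv => hfiber v ▸ hhalf v hv)
        (fun v hv => by rw [hfiber, hfiber, (hk' _ _).mp hf0]; exact hmax v hv)
        hij hj hfar ((hk' _ _).mpr hk)
  exact ⟨c, hc, hf.image_eq ▸ hrange⟩

lemma CompleteMultipartite.exists_key {α : Type*} [Finite α] {G : SimpleGraph α}
    (hG : CompleteMultipartite G) :
    ∃ k : α → ℕ, ∀ u v, u ≠ v → (G.Adj u v ↔ k u ≠ k v) := by
  obtain ⟨r, hr, hadj⟩ := hG
  let s : Setoid α := ⟨r, hr⟩
  obtain ⟨e, he⟩ := exists_injective_nat (Quotient s)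
  refine ⟨fun v => e ⟦v⟧, fun u v huv => ?_⟩
  rw [hadj u v huv, he.ne_iff, Ne, Quotient.eq]
  rfl

lemma exists_isCycleOn_covering_compl_largest_fiber {α : Type*} [Fintype α] [DecidableEq α]
    (G : SimpleGraph α) (k : α → ℕ) (hadj : ∀ u v, k u ≠ k v → G.Adj u v) (v₀ : α)
    (hmax : ∀ v, #{u | k u = k v} ≤ #{u | k u = k v₀}) (hO : 2 ≤ #{u | k u ≠ k v₀}) :
    ∃ (n : ℕ) (c : ZMod n → α),
      IsCycleOn G n c ∧ ∀ u, k u ≠ k v₀ → u ∈ Set.range c := by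
  set P : Finset α := {u | k u = k v₀}
  set O : Finset α := {u | k u ≠ k v₀}
  -- Trimming the largest part `P` to `min #P #O` vertices leaves no part with more than half.
  obtain ⟨T, hTP, hT⟩ := exists_subset_card_eq (min_le_left #P #O)
  have hdisj : Disjoint T O :=
    disjoint_of_subset_left hTP (disjoint_filter.mpr fun _ _ h h' => h' h)
  set S := T ∪ O
  have hScard : #S = #T + #O := card_union_of_disjoint hdisj
  have hP : 1 ≤ #P := card_pos.mpr ⟨v₀, mem_filter.mpr ⟨mem_univ _, rfl⟩⟩
  have hfiber : ∀ v ∈ S, #{u ∈ S | k u = k v} ≤ #T := by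
    intro v _
    by_cases hv : k v = k v₀
    · refine card_le_card fun u hu => ?_
      obtain ⟨huS, hu⟩ := mem_filter.mp hu
      exact (mem_union.mp huS).resolve_right fun huO => (mem_filter.mp huO).2 (hu.trans hv)
    · have hPv : #{u ∈ S | k u = k v} ≤ #P :=
        (card_le_card fun u hu => by simpa using (mem_filter.mp hu).2).trans (hmax v)
      have hOv : #{u ∈ S | k u = k v} ≤ #O := card_le_card fun u hu => by
        obtain ⟨-, hu⟩ := mem_filter.mp hu
        exact mem_filter.mpr ⟨mem_univ _, hu ▸ hv⟩
      omega
  obtain ⟨c, hc, hSc⟩ := exists_isCycleOn_of_two_mul_card_fiber_le G S k (by omega)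
    (fun u _ v _ huv => hadj u v huv) (fun v hv => by have := hfiber v hv; omega)
  exact ⟨#S, c, hc, fun u hu => hSc (mem_union_right _ (by simpa [O] using hu))⟩

theorem stmt_10_general (G : SimpleGraph V)
    (hm : CompleteMultipartite G)
    (ht : ∃ a b c : V, G.Adj a b ∧ G.Adj b c ∧ G.Adj a c) :
    ∃ (n : ℕ) (c : ZMod n → V), DominatingCycle G n c := by
  obtain ⟨k, hk⟩ := hm.exists_key
  have hadj : ∀ u v, k u ≠ k v → G.Adj u v :=
    fun u v h => (hk u v (by rintro rfl; exact h rfl)).mpr h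
  have hkey : ∀ u v, G.Adj u v → k u ≠ k v := fun u v h => (hk u v h.ne).mp h
  obtain ⟨a, b, c, hab, hbc, hac⟩ := ht
  obtain ⟨v₀, -, hmax⟩ :=
    exists_max_image univ (fun v => #{u | k u = k v}) ⟨a, mem_univ a⟩
  -- At most one vertex of the triangle lies in the largest part.
  have hO : 2 ≤ #{u | k u ≠ k v₀} := by
    refine one_lt_card.mpr ?_
    simp only [mem_filter, mem_univ, true_and]
    by_cases ha : k a = k v₀
    · exact ⟨b, ha ▸ (hkey a b hab).symm, c, ha ▸ (hkey a c hac).symm, hbc.ne⟩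
    by_cases hb : k b = k v₀
    · exact ⟨a, ha, c, hb ▸ (hkey b c hbc).symm, hac.ne⟩
    · exact ⟨a, ha, b, hb, hab.ne⟩
  obtain ⟨n, c, hc, hcov⟩ :=
    exists_isCycleOn_covering_compl_largest_fiber G k hadj v₀ (fun v => hmax v (mem_univ v)) hO
  refine ⟨n, c, hc, fun u v huv => ?_⟩
  by_cases hu : k u = k v₀
  · exact Or.inr (hcov v (hu ▸ (hkey u v huv).symm))
  · exact Or.inl (hcov u hu)

theorem stmt_10 (G : SimpleGraph V) (h2 : TwoConnected G)
    (hm : CompleteMultipartite G)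
    (ht : ∃ a b c : V, G.Adj a b ∧ G.Adj b c ∧ G.Adj a c) :
    ∃ (n : ℕ) (c : ZMod n → V), DominatingCycle G n c :=
  stmt_10_general G hm ht
end

section
/- Let G be a connected Z1-free graph (G has no induced subgraph isomorphic to the triangle with a pendant edge). If G contains a triangle, then G is a complete multipartite graph. -/
open SimpleGraph

variable {V : Type*} [Fintype V] [DecidableEq V]

section Olariu

variable {G : SimpleGraph V}

omit [Fintype V] [DecidableEq V] in
lemma pawfree (hz : Z1Free G) {a b c d : V}
    (hab : G.Adj a b) (hbc : G.Adj b c) (hac : G.Adj a c) (hcd : G.Adj c d) :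
    G.Adj a d ∨ G.Adj b d := by
  by_contra h
  push_neg at h
  obtain ⟨had, hbd⟩ := h
  apply hz
  refine ⟨a, b, c, d, ?_, hab, hbc, hac, hcd, had, hbd⟩
  have hda : d ≠ a := fun h => hbd (h ▸ hab.symm)
  have hdb : d ≠ b := fun h => had (h ▸ hab)
  simp [List.nodup_cons, hab.ne, hac.ne, hbc.ne, hcd.ne, Ne.symm hda, Ne.symm hdb]

omit [Fintype V] [DecidableEq V] in
/-- Any neighbor of a vertex in a triangle is itself in a triangle. -/
lemma triangle_step (hz : Z1Free G) {u v : V}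
    (hu : ∃ x y, G.Adj u x ∧ G.Adj u y ∧ G.Adj x y) (huv : G.Adj u v) :
    ∃ x y, G.Adj v x ∧ G.Adj v y ∧ G.Adj x y := by
  obtain ⟨x, y, hux, huy, hxy⟩ := hu
  rcases pawfree hz hxy huy.symm hux.symm huv with h | h
  · exact ⟨u, x, huv.symm, h.symm, hux⟩
  · exact ⟨u, y, huv.symm, h.symm, huy⟩

omit [Fintype V] [DecidableEq V] in
/-- In a connected paw-free graph containing a triangle, every vertex is in a triangle. -/
lemma all_in_triangle (hconn : G.Connected) (hz : Z1Free G)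
    (ht : ∃ a b c : V, G.Adj a b ∧ G.Adj b c ∧ G.Adj a c) (v : V) :
    ∃ x y, G.Adj v x ∧ G.Adj v y ∧ G.Adj x y := by
  obtain ⟨a, b, c, hab, hbc, hac⟩ := ht
  obtain ⟨w⟩ := hconn.preconnected a v
  have key : ∀ {s t : V}, G.Walk s t → (∃ x y, G.Adj s x ∧ G.Adj s y ∧ G.Adj x y) →
      ∃ x y, G.Adj t x ∧ G.Adj t y ∧ G.Adj x y := by
    intro s t w
    induction w with
    | nil => exact id
    | cons h p ih => exact fun hs => ih (triangle_step hz hs h)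
  exact key w ⟨b, c, hab, hac, hbc⟩

omit [Fintype V] [DecidableEq V] in
/-- Every edge lies in a triangle. -/
lemma edge_in_triangle (hconn : G.Connected) (hz : Z1Free G)
    (ht : ∃ a b c : V, G.Adj a b ∧ G.Adj b c ∧ G.Adj a c) {u w : V} (huw : G.Adj u w) :
    ∃ x, G.Adj u x ∧ G.Adj w x := by
  obtain ⟨x, y, hux, huy, hxy⟩ := all_in_triangle hconn hz ht u
  rcases pawfree hz hxy huy.symm hux.symm huw with h | h
  · exact ⟨x, hux, h.symm⟩
  · exact ⟨y, huy, h.symm⟩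

omit [Fintype V] [DecidableEq V] in
/-- The key contradiction: an edge `ab`, a vertex `c` nonadjacent to both, and a
common neighbor `z` of `c` and one of `a`, `b`, contradict paw-freeness. -/
lemma final_step (hconn : G.Connected) (hz : Z1Free G)
    (ht : ∃ a b c : V, G.Adj a b ∧ G.Adj b c ∧ G.Adj a c) {a b c z : V}
    (hab : G.Adj a b) (hca : ¬ G.Adj c a) (hcb : ¬ G.Adj c b)
    (hcz : G.Adj c z) (hzab : G.Adj z a ∨ G.Adj z b) : False := by
  obtain ⟨x, hax, hbx⟩ := edge_in_triangle hconn hz ht hab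
  have hcx : ¬ G.Adj c x := by
    intro h
    rcases pawfree hz hab hbx hax h.symm with h' | h'
    · exact hca h'.symm
    · exact hcb h'.symm
  rcases hzab with hza | hzb
  · rcases pawfree hz hbx hax.symm hab.symm hza.symm with hbz | hxz
    · rcases pawfree hz hab hbz hza.symm hcz.symm with h' | h'
      · exact hca h'.symm
      · exact hcb h'.symm
    · rcases pawfree hz hax hxz hza.symm hcz.symm with h' | h'
      · exact hca h'.symm
      · exact hcx h'.symm
  · rcases pawfree hz hax hbx.symm hab hzb.symm with haz | hxz
    · rcases pawfree hz hab hzb.symm haz hcz.symm with h' | h'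
      · exact hca h'.symm
      · exact hcb h'.symm
    · rcases pawfree hz hbx hxz hzb.symm hcz.symm with h' | h'
      · exact hcb h'.symm
      · exact hcx h'.symm

omit [Fintype V] [DecidableEq V] in
/-- Non-adjacency is transitive: no vertex `c` is nonadjacent to both ends of an
edge `ab`. (Induction on the distance from `c` to `a`.) -/
lemma no_bad_triple (hconn : G.Connected) (hz : Z1Free G)
    (ht : ∃ a b c : V, G.Adj a b ∧ G.Adj b c ∧ G.Adj a c) :
    ∀ (k : ℕ) (a b c : V), G.dist c a ≤ k → G.Adj a b →
      ¬ G.Adj c a → ¬ G.Adj c b → False := by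
  intro k
  induction k with
  | zero =>
    intro a b c hd hab hca hcb
    have hc : c = a := hconn.dist_eq_zero_iff.mp (Nat.le_zero.mp hd)
    exact hcb (hc ▸ hab)
  | succ k ih =>
    intro a b c hd hab hca hcb
    by_cases hceqa : c = a
    · exact hcb (hceqa ▸ hab)
    obtain ⟨w, hw⟩ := hconn.exists_walk_length_eq_dist c a
    cases w with
    | nil => exact hceqa rfl
    | @cons _ p1 _ h p =>
      have hdp : G.dist p1 a ≤ k := by
        have h1 : G.dist p1 a ≤ p.length := SimpleGraph.dist_le p
        have h2 : p.length + 1 = G.dist c a := by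
          simpa [SimpleGraph.Walk.length_cons] using hw
        omega
      by_cases hp1 : G.Adj p1 a ∨ G.Adj p1 b
      · exact final_step hconn hz ht hab hca hcb h hp1
      · push_neg at hp1
        exact ih a b p1 hdp hab hp1.1 hp1.2

end Olariu


theorem stmt_11 (G : SimpleGraph V) (hconn : G.Connected) (hz : Z1Free G)
    (ht : ∃ a b c : V, G.Adj a b ∧ G.Adj b c ∧ G.Adj a c) :
    CompleteMultipartite G := by
  refine ⟨fun u v => u = v ∨ ¬ G.Adj u v, ⟨fun u => Or.inl rfl, ?_, ?_⟩, ?_⟩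
  · rintro u v (rfl | h)
    · exact Or.inl rfl
    · exact Or.inr fun h' => h h'.symm
  · rintro u v w (rfl | huv) hvw
    · exact hvw
    · rcases hvw with rfl | hvw
      · exact Or.inr huv
      · refine Or.imp_right ?_ (em (u = w))
        intro huw hadj
        exact no_bad_triple hconn hz ht (G.dist v u) u w v le_rfl hadj
          (fun h => huv h.symm) hvw
  · intro u v huv
    constructor
    · rintro hadj (rfl | h)
      · exact huv rfl
      · exact h hadj
    · intro h
      by_contra hadj
      exact h (Or.inr hadj)
end

section
/- Let G be a graph such that no longest cycle of G is a dominating cycle, and let C be a longest cycle of G chosen so that the maximum order μ(C) of a component of G − C is as small as possible, and subject to that, the number ω(C) of components of G − C of order μ(C) is as small as possible. Let H be a component of G − C with |H| = μ(C). If S is an independent set of G with S ⊆ V(C) and no vertex of S has a neighbor outside C, then there is no longest cycle D of G with V(D) ⊇ V(C) \ S and V(D) ∩ V(H) ≠ ∅. -/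
open SimpleGraph

variable {V : Type*} [Fintype V] [DecidableEq V]

/-! Suppose `D` is a longest cycle through `V(C) \ S` meeting `H`. Every neighbour of a vertex
of `S` lies in `V(C) \ S ⊆ V(D)`, so the vertices of `C` missed by `D` are isolated in `G - D`.
As `C` is not dominating, `μ(C) ≥ 2`; hence every component of `G - D` of order at least 2 avoids
`V(C)` and so lies inside a component of `G - C`. Thus `μ(D) ≤ μ(C)`, with equality by the choice
of `C`, and then every maximum component of `G - D` is a maximum component of `G - C` other than
`H` (which meets `D`), so `ω(D) < ω(C)`, contradicting the choice of `C`. -/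

section ComponentsOff

omit [Fintype V] [DecidableEq V]

variable {G : SimpleGraph V} {R R' K : Set V} {u v x : V}

def compOff (G : SimpleGraph V) (R : Set V) (u : V) : Set V :=
  {v | ∃ w : G.Walk u v, ∀ y ∈ w.support, y ∉ R}

lemma mem_compOff_self (hu : u ∉ R) : u ∈ compOff G R u :=
  ⟨.nil, by simpa using hu⟩

lemma disjoint_compOff : Disjoint (compOff G R u) R :=
  Set.disjoint_left.2 fun _ ⟨w, hw⟩ => hw _ w.end_mem_support

lemma mem_compOff_of_adj (hv : v ∈ compOff G R u) (hvx : G.Adj v x) (hx : x ∉ R) :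
    x ∈ compOff G R u := by
  obtain ⟨w, hw⟩ := hv
  refine ⟨w.concat hvx, fun y hy => ?_⟩
  rw [Walk.support_concat, List.mem_append, List.mem_singleton] at hy
  exact hy.elim (hw y) fun h => h ▸ hx

lemma isCompOff_compOff (hu : u ∉ R) : IsCompOff G R (compOff G R u) := by
  classical
  refine ⟨⟨u, mem_compOff_self hu⟩, disjoint_compOff, ?_,
    fun a b ha hb hbR hab => hb (mem_compOff_of_adj ha hab hbR)⟩
  refine induce_connected_of_patches u (mem_compOff_self hu) fun {v} ⟨w, hw⟩ => ?_
  refine ⟨{y | y ∈ w.support}, fun y hy => ⟨w.takeUntil y hy,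
    fun z hz => hw z (w.support_takeUntil_subset_support hy hz)⟩, w.start_mem_support,
    w.end_mem_support, w.connected_induce_support.preconnected _ _⟩

lemma IsCompOff.subset_of_preconnected {T : Set V} (hK : IsCompOff G R K)
    (hT : (G.induce T).Preconnected) (hTR : Disjoint T R) (huK : u ∈ K) (huT : u ∈ T) :
    T ⊆ K := by
  intro t ht
  obtain ⟨w⟩ := hT ⟨u, huT⟩ ⟨t, ht⟩
  suffices ∀ {a b : T}, (G.induce T).Walk a b → a.1 ∈ K → b.1 ∈ K from this w huK
  intro a b w
  induction w with
  | nil => exact id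
  | cons hab _ ih =>
    exact fun ha => ih <| by_contra fun hb =>
      hK.2.2.2 _ _ ha hb (Set.disjoint_left.1 hTR (Subtype.prop _)) hab

lemma IsCompOff.exists_superset (hK : IsCompOff G R' K) (hKR : Disjoint K R) :
    ∃ L, IsCompOff G R L ∧ K ⊆ L := by
  obtain ⟨u, hu⟩ := hK.1
  have hu' : u ∉ R := Set.disjoint_left.1 hKR hu
  exact ⟨_, isCompOff_compOff hu',
    (isCompOff_compOff hu').subset_of_preconnected hK.2.2.1.preconnected hKR
      (mem_compOff_self hu') hu⟩

lemma IsCompOff.exists_adj (hK : IsCompOff G R K) (hK2 : 1 < K.ncard) (hx : x ∈ K) :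
    ∃ y ∈ K, G.Adj x y := by
  have : Nontrivial K :=
    Set.nontrivial_coe_sort.2 (Set.one_lt_ncard_iff_nontrivial_and_finite.1 hK2).1
  obtain ⟨y, hxy⟩ := hK.2.2.1.preconnected.exists_adj_of_nontrivial ⟨x, hx⟩
  exact ⟨y, y.2, hxy⟩

lemma ncard_le_muC [Finite V] (hK : IsCompOff G R K) : K.ncard ≤ muC G R :=
  le_csSup ⟨Nat.card V, by rintro _ ⟨L, -, rfl⟩; exact Set.ncard_le_card L⟩ ⟨K, hK, rfl⟩

lemma two_le_muC_of_adj [Finite V] (huv : G.Adj u v) (hu : u ∉ R) (hv : v ∉ R) :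
    2 ≤ muC G R := by
  have hpair : {u, v} ⊆ compOff G R u := by
    rintro x (rfl | rfl)
    exacts [mem_compOff_self hu, mem_compOff_of_adj (mem_compOff_self hu) huv hv]
  calc 2 = ({u, v} : Set V).ncard := (Set.ncard_pair huv.ne).symm
    _ ≤ (compOff G R u).ncard := Set.ncard_le_ncard hpair
    _ ≤ muC G R := ncard_le_muC (isCompOff_compOff hu)

end ComponentsOff

/-! Here `R` and `R'` stand for `V(C)` and `V(D)`. -/
section Exchange

omit [Fintype V] [DecidableEq V]

variable {G : SimpleGraph V} {R R' K H : Set V}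

lemma IsCompOff.disjoint_of_one_lt_ncard (hiso : ∀ x ∈ R \ R', ∀ y, G.Adj x y → y ∈ R')
    (hK : IsCompOff G R' K) (hK2 : 1 < K.ncard) : Disjoint K R := by
  refine Set.disjoint_left.2 fun x hxK hxR => ?_
  obtain ⟨y, hyK, hxy⟩ := hK.exists_adj hK2 hxK
  have hxR' : x ∉ R' := Set.disjoint_left.1 hK.2.1 hxK
  exact Set.disjoint_left.1 hK.2.1 hyK (hiso x ⟨hxR, hxR'⟩ y hxy)

variable [Finite V]

lemma muC_le_of_isolated (hR : 2 ≤ muC G R) (hiso : ∀ x ∈ R \ R', ∀ y, G.Adj x y → y ∈ R') :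
    muC G R' ≤ muC G R := by
  refine csSup_le' ?_
  rintro _ ⟨K, hK, rfl⟩
  by_cases hK2 : 1 < K.ncard
  · obtain ⟨L, hL, hKL⟩ := hK.exists_superset (hK.disjoint_of_one_lt_ncard hiso hK2)
    exact (Set.ncard_le_ncard hKL).trans (ncard_le_muC hL)
  · omega

lemma IsCompOff.isCompOff_of_ncard_eq_muC (hR : 2 ≤ muC G R)
    (hiso : ∀ x ∈ R \ R', ∀ y, G.Adj x y → y ∈ R') (hK : IsCompOff G R' K)
    (hKmu : K.ncard = muC G R) : IsCompOff G R K := by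
  obtain ⟨L, hL, hKL⟩ := hK.exists_superset (hK.disjoint_of_one_lt_ncard hiso (by omega))
  rwa [Set.eq_of_subset_of_ncard_le hKL (hKmu ▸ ncard_le_muC hL)]

lemma omegaC_lt_of_isolated (hmu : muC G R' = muC G R) (hR : 2 ≤ muC G R)
    (hiso : ∀ x ∈ R \ R', ∀ y, G.Adj x y → y ∈ R') (hH : IsCompOff G R H)
    (hHmu : H.ncard = muC G R) (hR'H : (R' ∩ H).Nonempty) : omegaC G R' < omegaC G R := by
  have hsub : {K | IsCompOff G R' K ∧ K.ncard = muC G R'} ⊆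
      {K | IsCompOff G R K ∧ K.ncard = muC G R} \ {H} := by
    rintro K ⟨hK, hKmu⟩
    rw [hmu] at hKmu
    refine ⟨⟨hK.isCompOff_of_ncard_eq_muC hR hiso hKmu, hKmu⟩, ?_⟩
    rintro rfl
    obtain ⟨x, hxR', hxK⟩ := hR'H
    exact Set.disjoint_left.1 hK.2.1 hxK hxR'
  calc omegaC G R' ≤ ({K | IsCompOff G R K ∧ K.ncard = muC G R} \ {H}).ncard :=
        Set.ncard_le_ncard hsub
    _ < omegaC G R := Set.ncard_sdiff_singleton_lt_of_mem ⟨hH, hHmu⟩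

end Exchange

theorem stmt_12_general (G : SimpleGraph V)
    (hnd : ∀ (m : ℕ) (d : ZMod m → V), IsLongestCycle G m d → ¬ DominatingCycle G m d)
    (n : ℕ) (c : ZMod n → V) (hc : IsLongestCycle G n c)
    (hmin : ∀ (m : ℕ) (d : ZMod m → V), IsLongestCycle G m d →
      muC G (Set.range c) ≤ muC G (Set.range d) ∧
      (muC G (Set.range c) = muC G (Set.range d) →
        omegaC G (Set.range c) ≤ omegaC G (Set.range d)))
    (H : Set V) (hH : IsCompOff G (Set.range c) H)
    (hHmu : H.ncard = muC G (Set.range c))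
    (S : Set V)
    (hSind : ∀ u ∈ S, ∀ v ∈ S, ¬ G.Adj u v)
    (hSout : ∀ u ∈ S, ∀ v ∉ Set.range c, ¬ G.Adj u v) :
    ¬ ∃ (m : ℕ) (d : ZMod m → V), IsLongestCycle G m d ∧
      Set.range c \ S ⊆ Set.range d ∧ (Set.range d ∩ H).Nonempty := by
  rintro ⟨m, d, hd, hsub, hdH⟩
  have hiso : ∀ x ∈ Set.range c \ Set.range d, ∀ y, G.Adj x y → y ∈ Set.range d := by
    rintro x ⟨hxc, hxd⟩ y hxy
    have hxS : x ∈ S := by_contra fun hxS => hxd (hsub ⟨hxc, hxS⟩)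
    have hyc : y ∈ Set.range c := by_contra fun hyc => hSout x hxS y hyc hxy
    exact hsub ⟨hyc, fun hyS => hSind x hxS y hyS hxy⟩
  have hmu2 : 2 ≤ muC G (Set.range c) := by
    obtain ⟨u, v, huv, hu, hv⟩ : ∃ u v, G.Adj u v ∧ u ∉ Set.range c ∧ v ∉ Set.range c := by
      by_contra! h
      exact hnd n c hc ⟨hc.1, fun u v huv => or_iff_not_imp_left.2 (h u v huv)⟩
    exact two_le_muC_of_adj huv hu hv
  obtain ⟨hle, homega⟩ := hmin m d hd
  have hmu := le_antisymm hle (muC_le_of_isolated hmu2 hiso)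
  exact (homega hmu).not_gt (omegaC_lt_of_isolated hmu.symm hmu2 hiso hH hHmu hdH)

theorem stmt_12 (G : SimpleGraph V)
    (hnd : ∀ (m : ℕ) (d : ZMod m → V), IsLongestCycle G m d → ¬ DominatingCycle G m d)
    (n : ℕ) (c : ZMod n → V) (hc : IsLongestCycle G n c)
    (hmin : ∀ (m : ℕ) (d : ZMod m → V), IsLongestCycle G m d →
      muC G (Set.range c) ≤ muC G (Set.range d) ∧
      (muC G (Set.range c) = muC G (Set.range d) →
        omegaC G (Set.range c) ≤ omegaC G (Set.range d)))
    (H : Set V) (hH : IsCompOff G (Set.range c) H)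
    (hHmu : H.ncard = muC G (Set.range c))
    (S : Set V) (hSC : S ⊆ Set.range c)
    (hSind : ∀ u ∈ S, ∀ v ∈ S, ¬ G.Adj u v)
    (hSout : ∀ u ∈ S, ∀ v ∉ Set.range c, ¬ G.Adj u v) :
    ¬ ∃ (m : ℕ) (d : ZMod m → V), IsLongestCycle G m d ∧
      Set.range c \ S ⊆ Set.range d ∧ (Set.range d ∩ H).Nonempty :=
  stmt_12_general G hnd n c hc hmin H hH hHmu S hSind hSout
end
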